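/- arXiv:1906.01986 — 9 statements merged into one kernel-verified Lean document; each statement's English description precedes it below -/
import Mathlib

section
/- In a nonatomic aggregative game, if the game is aggregatively strictly monotone on the feasible constrained set, then any two variational Wardrop equilibria have the same aggregate-action profile ∫x. -/
open Metric MeasureTheory
open scoped RealInnerProductSpace

/-- Lebesgue measure restricted to the player set `Θ = [0,1]`. -/
noncomputable def μ01 : Measure ℝ := volume.restrict (Set.Icc 0 1)

/-- A variational Wardrop equilibrium of the nonatomic aggregative game with action sets
`𝒳`, gradient map `g` (where `g θ x Y = ∇₁f_θ(x, Y)`) and aggregative constraint set `A`. -/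
def IsVWE {T : ℕ} (𝒳 : ℝ → Set (EuclideanSpace ℝ (Fin T)))
    (g : ℝ → EuclideanSpace ℝ (Fin T) → EuclideanSpace ℝ (Fin T) → EuclideanSpace ℝ (Fin T))
    (A : Set (EuclideanSpace ℝ (Fin T))) (x : ℝ → EuclideanSpace ℝ (Fin T)) : Prop :=
  Measurable x ∧ (∀ θ ∈ Set.Icc (0:ℝ) 1, x θ ∈ 𝒳 θ) ∧ (∫ θ, x θ ∂μ01) ∈ A ∧
  ∀ z : ℝ → EuclideanSpace ℝ (Fin T), Measurable z →
    (∀ θ ∈ Set.Icc (0:ℝ) 1, z θ ∈ 𝒳 θ) → (∫ θ, z θ ∂μ01) ∈ A →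
    0 ≤ ∫ θ, ⟪g θ (x θ) (∫ t, x t ∂μ01), z θ - x θ⟫ ∂μ01

/-- Theorem `th:unique_vwe` ii: in an aggregatively strictly monotone
nonatomic aggregative game with aggregative constraint, any two variational Wardrop
equilibria have the same aggregate-action profile. -/
theorem agg_strictly_monotone_unique_aggregate {T : ℕ} {L : ℝ}
    (𝒳 : ℝ → Set (EuclideanSpace ℝ (Fin T)))
    (g : ℝ → EuclideanSpace ℝ (Fin T) → EuclideanSpace ℝ (Fin T) → EuclideanSpace ℝ (Fin T))
    (A : Set (EuclideanSpace ℝ (Fin T)))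
    (Ms : Set (EuclideanSpace ℝ (Fin T)))
    (hMconv : Convex ℝ Ms) (hMcomp : IsCompact Ms)
    (hXsub : ∀ θ ∈ Set.Icc (0:ℝ) 1, 𝒳 θ ⊆ Ms)
    (hXne : ∀ θ ∈ Set.Icc (0:ℝ) 1, (𝒳 θ).Nonempty)
    (hXconv : ∀ θ ∈ Set.Icc (0:ℝ) 1, Convex ℝ (𝒳 θ))
    (hXcomp : ∀ θ ∈ Set.Icc (0:ℝ) 1, IsCompact (𝒳 θ))
    (hgbd : ∀ θ x Y, ‖g θ x Y‖ ≤ L)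
    (hgmeas : ∀ x : ℝ → EuclideanSpace ℝ (Fin T), Measurable x → ∀ Y,
      AEStronglyMeasurable (fun θ => g θ (x θ) Y) μ01)
    -- aggregative strict monotonicity of the game on profiles valued in `Ms`
    (hmono : ∀ x y : ℝ → EuclideanSpace ℝ (Fin T), Measurable x → Measurable y →
      (∀ θ ∈ Set.Icc (0:ℝ) 1, x θ ∈ Ms) → (∀ θ ∈ Set.Icc (0:ℝ) 1, y θ ∈ Ms) →
      0 ≤ (∫ θ, ⟪g θ (x θ) (∫ t, x t ∂μ01) - g θ (y θ) (∫ t, y t ∂μ01), x θ - y θ⟫ ∂μ01) ∧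
      ((∫ θ, ⟪g θ (x θ) (∫ t, x t ∂μ01) - g θ (y θ) (∫ t, y t ∂μ01), x θ - y θ⟫ ∂μ01) = 0
        ↔ (∫ θ, x θ ∂μ01) = (∫ θ, y θ ∂μ01)))
    (x y : ℝ → EuclideanSpace ℝ (Fin T))
    (hx : IsVWE 𝒳 g A x) (hy : IsVWE 𝒳 g A y) :
    (∫ θ, x θ ∂μ01) = (∫ θ, y θ ∂μ01) := by
  obtain ⟨hxm, hxmem, hxA, hxopt⟩ := hx
  obtain ⟨hym, hymem, hyA, hyopt⟩ := hy
  set X := ∫ θ, x θ ∂μ01 with hX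
  set Y := ∫ θ, y θ ∂μ01 with hY
  have hxMs : ∀ θ ∈ Set.Icc (0:ℝ) 1, x θ ∈ Ms := fun θ hθ => hXsub θ hθ (hxmem θ hθ)
  have hyMs : ∀ θ ∈ Set.Icc (0:ℝ) 1, y θ ∈ Ms := fun θ hθ => hXsub θ hθ (hymem θ hθ)
  obtain ⟨C, hC⟩ : ∃ C, ∀ z ∈ Ms, ‖z‖ ≤ C := hMcomp.isBounded.exists_norm_le
  have hae : ∀ᵐ θ ∂μ01, θ ∈ Set.Icc (0:ℝ) 1 := by
    rw [μ01]; exact ae_restrict_mem measurableSet_Icc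
  have hfin : IsFiniteMeasure μ01 := by
    rw [μ01]; exact inferInstance
  -- integrability of the relevant inner-product integrands
  have key : ∀ (w : ℝ → EuclideanSpace ℝ (Fin T)), Measurable w →
      ∀ W, Integrable (fun θ => ⟪g θ (w θ) W, x θ - y θ⟫) μ01 := by
    intro w hwm W
    have hmeas : AEStronglyMeasurable (fun θ => ⟪g θ (w θ) W, x θ - y θ⟫) μ01 := by
      exact AEStronglyMeasurable.inner (hgmeas w hwm W)
        ((hxm.sub hym).aestronglyMeasurable)
    refine Integrable.mono' (integrable_const (L * (C + C))) hmeas ?_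
    filter_upwards [hae] with θ hθ
    calc ‖⟪g θ (w θ) W, x θ - y θ⟫‖ ≤ ‖g θ (w θ) W‖ * ‖x θ - y θ‖ := norm_inner_le_norm _ _
      _ ≤ L * (C + C) := by
          have h1 : ‖x θ - y θ‖ ≤ C + C := by
            refine (norm_sub_le _ _).trans ?_
            exact add_le_add (hC _ (hxMs θ hθ)) (hC _ (hyMs θ hθ))
          have h0 : (0:ℝ) ≤ ‖g θ (w θ) W‖ := norm_nonneg _
          exact mul_le_mul (hgbd θ _ _) h1 (norm_nonneg _) (h0.trans (hgbd θ _ _))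
  have hIx := key x hxm X
  have hIy := key y hym Y
  have h1 := hxopt y hym hymem hyA
  have h2 := hyopt x hxm hxmem hxA
  -- rewrite h1 : ∫ ⟪g_x, y - x⟫ = - ∫ ⟪g_x, x - y⟫
  have h1' : (∫ θ, ⟪g θ (x θ) X, x θ - y θ⟫ ∂μ01) ≤ 0 := by
    have : (∫ θ, ⟪g θ (x θ) X, y θ - x θ⟫ ∂μ01)
        = - ∫ θ, ⟪g θ (x θ) X, x θ - y θ⟫ ∂μ01 := by
      rw [← integral_neg]
      congr 1; funext θ
      rw [← inner_neg_right]; congr 1; abel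
    rw [this] at h1
    linarith
  have h2' : 0 ≤ (∫ θ, ⟪g θ (y θ) Y, x θ - y θ⟫ ∂μ01) := h2
  have hsub : (∫ θ, ⟪g θ (x θ) X - g θ (y θ) Y, x θ - y θ⟫ ∂μ01)
      = (∫ θ, ⟪g θ (x θ) X, x θ - y θ⟫ ∂μ01) - ∫ θ, ⟪g θ (y θ) Y, x θ - y θ⟫ ∂μ01 := by
    rw [← integral_sub hIx hIy]
    congr 1; funext θ
    rw [inner_sub_left]
  have hle : (∫ θ, ⟪g θ (x θ) X - g θ (y θ) Y, x θ - y θ⟫ ∂μ01) ≤ 0 := by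
    rw [hsub]; linarith
  obtain ⟨hge, hiff⟩ := hmono x y hxm hym hxMs hyMs
  exact hiff.mp (le_antisymm hle hge)
end

section
/- Consider a public products nonatomic aggregative game with cost functions f_θ(x_θ, X) = ⟨x_θ, c(X)⟩ − u_θ(x_θ), where c : M → R^T is a monotone map and each u_θ is concave and differentiable. Then the game is monotone: ∫_Θ ⟨g_x(θ) − g_y(θ), x_θ − y_θ⟩ dθ ≥ 0 for all feasible profiles x, y. -/
open MeasureTheory
open scoped RealInnerProductSpace

section Gradient

variable {E : Type*} [NormedAddCommGroup E] [InnerProductSpace ℝ E] [CompleteSpace E]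
  {s : Set E} {f : E → ℝ} {x y gx gy : E}

theorem ConcaveOn.le_add_inner_of_hasGradientAt (hf : ConcaveOn ℝ s f) (hx : x ∈ s) (hy : y ∈ s)
    (hgx : HasGradientAt f gx x) : f y ≤ f x + ⟪gx, y - x⟫ := by
  set ℓ : ℝ →ᵃ[ℝ] E := AffineMap.lineMap x y
  have hline : ConcaveOn ℝ (ℓ ⁻¹' s) (f ∘ ℓ) := hf.comp_affineMap ℓ
  have hderiv : HasDerivAt (f ∘ ℓ) ⟪gx, y - x⟫ 0 := by
    have hgx' : HasFDerivAt f (InnerProductSpace.toDual ℝ E gx) (ℓ 0) := by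
      simpa [ℓ] using hgx.hasFDerivAt
    simpa using hgx'.comp_hasDerivAt (0 : ℝ) AffineMap.hasDerivAt_lineMap
  have hslope := hline.slope_le_of_hasDerivAt (x := 0) (y := 1) (by simpa [ℓ] using hx)
    (by simpa [ℓ] using hy) zero_lt_one hderiv
  simpa only [ℓ, slope_def_field, Function.comp_apply, AffineMap.lineMap_apply_one,
    AffineMap.lineMap_apply_zero, sub_zero, div_one, tsub_le_iff_right, add_comm] using hslope

theorem ConcaveOn.inner_sub_sub_nonpos_of_hasGradientAt (hf : ConcaveOn ℝ s f) (hx : x ∈ s)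
    (hy : y ∈ s) (hgx : HasGradientAt f gx x) (hgy : HasGradientAt f gy y) :
    ⟪gx - gy, x - y⟫ ≤ 0 := by
  have hxy := hf.le_add_inner_of_hasGradientAt hx hy hgx
  have hyx := hf.le_add_inner_of_hasGradientAt hy hx hgy
  rw [← neg_sub x y, inner_neg_right] at hxy
  rw [inner_sub_left]
  linarith

end Gradient

theorem integral_add_nonneg_of_integrable_left {α : Type*} [MeasurableSpace α] {μ : Measure α}
    {f g : α → ℝ} (hf : Integrable f μ) (hf0 : 0 ≤ ∫ a, f a ∂μ) (hg : 0 ≤ᵐ[μ] g) :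
    0 ≤ ∫ a, f a + g a ∂μ := by
  by_cases hgi : Integrable g μ
  · rw [integral_add hf hgi]
    exact add_nonneg hf0 (integral_nonneg_of_ae hg)
  · -- `f + g` is not integrable either, so its integral is `0` by convention
    rw [integral_undef fun hfg => hgi ((integrable_add_iff_integrable_right' hf).mp hfg)]

theorem MeasureTheory.Integrable.of_ae_mem_isCompact {α E : Type*} [MeasurableSpace α]
    {μ : Measure α} [IsFiniteMeasure μ] [NormedAddCommGroup E] {K : Set E} {f : α → E}
    (hK : IsCompact K) (hf : AEStronglyMeasurable f μ) (hfK : ∀ᵐ a ∂μ, f a ∈ K) :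
    Integrable f μ := by
  obtain ⟨C, hC⟩ := hK.isBounded.exists_norm_le
  exact Integrable.of_bound hf C (hfK.mono fun a ha => hC _ ha)

instance isProbabilityMeasure_μ01 : IsProbabilityMeasure μ01 :=
  ⟨by simp [μ01]⟩

theorem public_products_monotone_general {T : ℕ}
    (Ms : Set (EuclideanSpace ℝ (Fin T)))
    (hMconv : Convex ℝ Ms) (hMcomp : IsCompact Ms)
    (c : EuclideanSpace ℝ (Fin T) → EuclideanSpace ℝ (Fin T))
    (u : ℝ → EuclideanSpace ℝ (Fin T) → ℝ)
    (gu : ℝ → EuclideanSpace ℝ (Fin T) → EuclideanSpace ℝ (Fin T))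
    (hcmono : ∀ X ∈ Ms, ∀ Y ∈ Ms, 0 ≤ ⟪c X - c Y, X - Y⟫)
    (hconc : ∀ θ ∈ Set.Icc (0:ℝ) 1, ConcaveOn ℝ Ms (u θ))
    (hgrad : ∀ θ ∈ Set.Icc (0:ℝ) 1, ∀ x ∈ Ms, HasGradientAt (u θ) (gu θ x) x)
    (x y : ℝ → EuclideanSpace ℝ (Fin T)) (hxm : Measurable x) (hym : Measurable y)
    (hx : ∀ θ ∈ Set.Icc (0:ℝ) 1, x θ ∈ Ms) (hy : ∀ θ ∈ Set.Icc (0:ℝ) 1, y θ ∈ Ms) :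
    0 ≤ ∫ θ, ⟪(c (∫ t, x t ∂μ01) - gu θ (x θ)) - (c (∫ t, y t ∂μ01) - gu θ (y θ)),
              x θ - y θ⟫ ∂μ01 := by
  have hxMs : ∀ᵐ θ ∂μ01, x θ ∈ Ms := ae_restrict_of_forall_mem measurableSet_Icc hx
  have hyMs : ∀ᵐ θ ∂μ01, y θ ∈ Ms := ae_restrict_of_forall_mem measurableSet_Icc hy
  have hxi := Integrable.of_ae_mem_isCompact hMcomp hxm.aestronglyMeasurable hxMs
  have hyi := Integrable.of_ae_mem_isCompact hMcomp hym.aestronglyMeasurable hyMs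
  set X := ∫ t, x t ∂μ01
  set Y := ∫ t, y t ∂μ01
  have hsplit : ∀ θ, ⟪(c X - gu θ (x θ)) - (c Y - gu θ (y θ)), x θ - y θ⟫ =
      ⟪c X - c Y, x θ - y θ⟫ + -⟪gu θ (x θ) - gu θ (y θ), x θ - y θ⟫ := fun θ => by
    rw [← inner_neg_left, ← inner_add_left]
    abel_nf
  simp_rw [hsplit]
  refine integral_add_nonneg_of_integrable_left ((hxi.sub hyi).const_inner _) ?_ ?_
  · rw [integral_inner (f := fun θ => x θ - y θ) (hxi.sub hyi), integral_sub hxi hyi]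
    exact hcmono X (hMconv.integral_mem hMcomp.isClosed hxMs hxi) Y
      (hMconv.integral_mem hMcomp.isClosed hyMs hyi)
  · filter_upwards [ae_restrict_mem measurableSet_Icc] with θ hθ
    exact neg_nonneg.mpr <| (hconc θ hθ).inner_sub_sub_nonpos_of_hasGradientAt (hx θ hθ)
      (hy θ hθ) (hgrad θ hθ _ (hx θ hθ)) (hgrad θ hθ _ (hy θ hθ))

/-- Proposition `prop:monotonemap` i: a public products nonatomic aggregative
game with costs `f_θ(x,X) = ⟨x, c(X)⟩ - u_θ(x)`, `c` monotone and `u_θ` concave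
differentiable, is monotone: for all profiles `x, y` valued in `M`,
`∫ ⟨g_x(θ) - g_y(θ), x_θ - y_θ⟩ dθ ≥ 0`, where `g_x(θ) = c(∫x) - ∇u_θ(x_θ)`. -/
theorem public_products_monotone {T : ℕ} {L : ℝ}
    (Ms : Set (EuclideanSpace ℝ (Fin T)))
    (hMconv : Convex ℝ Ms) (hMcomp : IsCompact Ms)
    (c : EuclideanSpace ℝ (Fin T) → EuclideanSpace ℝ (Fin T))
    (u : ℝ → EuclideanSpace ℝ (Fin T) → ℝ)
    (gu : ℝ → EuclideanSpace ℝ (Fin T) → EuclideanSpace ℝ (Fin T))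
    (hcmono : ∀ X ∈ Ms, ∀ Y ∈ Ms, 0 ≤ ⟪c X - c Y, X - Y⟫)
    (hconc : ∀ θ ∈ Set.Icc (0:ℝ) 1, ConcaveOn ℝ Ms (u θ))
    (hgrad : ∀ θ ∈ Set.Icc (0:ℝ) 1, ∀ x ∈ Ms, HasGradientAt (u θ) (gu θ x) x)
    (hgub : ∀ θ x, ‖gu θ x‖ ≤ L)
    (hgumeas : ∀ x : ℝ → EuclideanSpace ℝ (Fin T), Measurable x →
      AEStronglyMeasurable (fun θ => gu θ (x θ)) μ01)
    (x y : ℝ → EuclideanSpace ℝ (Fin T)) (hxm : Measurable x) (hym : Measurable y)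
    (hx : ∀ θ ∈ Set.Icc (0:ℝ) 1, x θ ∈ Ms) (hy : ∀ θ ∈ Set.Icc (0:ℝ) 1, y θ ∈ Ms) :
    0 ≤ ∫ θ, ⟪(c (∫ t, x t ∂μ01) - gu θ (x θ)) - (c (∫ t, y t ∂μ01) - gu θ (y θ)),
              x θ - y θ⟫ ∂μ01 :=
  public_products_monotone_general Ms hMconv hMcomp c u gu hcmono hconc hgrad x y hxm hym hx hy
end

section
/- In a public products game with f_θ(x_θ, X) = ⟨x_θ, c(X)⟩ − u_θ(x_θ), if c is strongly monotone with modulus β on M, then the game is aggregatively strongly monotone with modulus β: ∫_Θ ⟨g_x(θ) − g_y(θ), x_θ − y_θ⟩ dθ ≥ β‖∫x − ∫y‖² for all x, y ∈ L²([0,1], M). -/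
/-! The game map splits as `⟨c(∫x) - c(∫y), x_θ - y_θ⟩ + ⟨∇u_θ(y_θ) - ∇u_θ(x_θ), x_θ - y_θ⟩`.
The first term integrates to `⟨c(∫x) - c(∫y), ∫x - ∫y⟩ ≥ β‖∫x - ∫y‖²`, since `∫x, ∫y ∈ M` by
convexity and closedness of `M`; the second is pointwise nonnegative because the gradient of a
concave function is antitone. -/

open Metric MeasureTheory
open scoped RealInnerProductSpace

section FirstOrder

variable {E : Type*} [NormedAddCommGroup E] [NormedSpace ℝ E] {s : Set E} {f : E → ℝ} {a b : E}

theorem ConcaveOn.sub_le_fderiv_apply (hf : ConcaveOn ℝ s f) (ha : a ∈ s) (hb : b ∈ s)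
    {f' : E →L[ℝ] ℝ} (hf' : HasFDerivAt f f' a) : f b - f a ≤ f' (b - a) := by
  let ℓ := AffineMap.lineMap (k := ℝ) a b
  have hconv : ConvexOn ℝ (ℓ ⁻¹' s) ((-f) ∘ ℓ) := hf.neg.comp_affineMap ℓ
  have hderiv : HasDerivAt ((-f) ∘ ℓ) (-f' (b - a)) 0 := by
    have hℓ : HasDerivAt ℓ (b - a) 0 := AffineMap.hasDerivAt_lineMap
    simpa using hf'.neg.comp_hasDerivAt_of_eq (0 : ℝ) hℓ (by simp [ℓ])
  have hslope := hconv.le_slope_of_hasDerivAt (x := 0) (y := 1) (by simpa [ℓ]) (by simpa [ℓ])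
    one_pos hderiv
  simp only [slope_def_field, Function.comp_apply, Pi.neg_apply, ℓ, AffineMap.lineMap_apply_one,
    AffineMap.lineMap_apply_zero, sub_zero, div_one] at hslope
  linarith

end FirstOrder

section Gradient

variable {E : Type*} [NormedAddCommGroup E] [InnerProductSpace ℝ E] [CompleteSpace E]
  {s : Set E} {f : E → ℝ} {a b ga gb : E}

theorem ConcaveOn.sub_le_inner_gradient (hf : ConcaveOn ℝ s f) (ha : a ∈ s) (hb : b ∈ s)
    (hga : HasGradientAt f ga a) : f b - f a ≤ ⟪ga, b - a⟫ :=
  hf.sub_le_fderiv_apply ha hb hga.hasFDerivAt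

theorem ConcaveOn.inner_sub_gradient_nonneg (hf : ConcaveOn ℝ s f) (ha : a ∈ s) (hb : b ∈ s)
    (hga : HasGradientAt f ga a) (hgb : HasGradientAt f gb b) : 0 ≤ ⟪gb - ga, a - b⟫ := by
  have hab := hf.sub_le_inner_gradient ha hb hga
  have hba := hf.sub_le_inner_gradient hb ha hgb
  rw [← neg_sub a b, inner_neg_right] at hab
  rw [inner_sub_left]
  linarith

end Gradient

section Integral

variable {α E : Type*} [MeasurableSpace α] {μ : Measure α} [NormedAddCommGroup E]

theorem MeasureTheory.Integrable.of_ae_mem_of_isBounded [IsFiniteMeasure μ] {f : α → E}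
    {s : Set E} (hf : AEStronglyMeasurable f μ) (hs : Bornology.IsBounded s)
    (hfs : ∀ᵐ θ ∂μ, f θ ∈ s) : Integrable f μ := by
  obtain ⟨C, hC⟩ := hs.exists_norm_le
  exact .of_bound hf C (hfs.mono fun θ hθ => hC _ hθ)

variable [InnerProductSpace ℝ E]

theorem MeasureTheory.Integrable.bdd_inner {f g : α → E} {C : ℝ} (hg : Integrable g μ)
    (hf : AEStronglyMeasurable f μ) (hf_bound : ∀ᵐ θ ∂μ, ‖f θ‖ ≤ C) :
    Integrable (fun θ => ⟪f θ, g θ⟫) μ := by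
  refine (hg.norm.const_mul C).mono' (hf.inner hg.1) ?_
  filter_upwards [hf_bound] with θ hθ
  exact (norm_inner_le_norm _ _).trans (mul_le_mul_of_nonneg_right hθ (norm_nonneg _))

theorem inner_sub_integral_le_integral_inner_add [CompleteSpace E] {x y g : α → E} (v : E)
    (hx : Integrable x μ) (hy : Integrable y μ) (hg : Integrable (fun θ => ⟪g θ, x θ - y θ⟫) μ)
    (hg_nonneg : ∀ᵐ θ ∂μ, 0 ≤ ⟪g θ, x θ - y θ⟫) :
    ⟪v, ∫ θ, x θ ∂μ - ∫ θ, y θ ∂μ⟫ ≤ ∫ θ, ⟪v + g θ, x θ - y θ⟫ ∂μ := by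
  have hxy : Integrable (fun θ => x θ - y θ) μ := hx.sub hy
  simp_rw [inner_add_left]
  rw [integral_add (hxy.const_inner v) hg, integral_inner hxy, integral_sub hx hy]
  linarith [integral_nonneg_of_ae hg_nonneg]

end Integral

instance : IsProbabilityMeasure μ01 := ⟨by simp [μ01]⟩

theorem public_products_agg_strongly_monotone_general {T : ℕ} {L β : ℝ}
    (Ms : Set (EuclideanSpace ℝ (Fin T)))
    (hMconv : Convex ℝ Ms) (hMcomp : IsCompact Ms)
    (c : EuclideanSpace ℝ (Fin T) → EuclideanSpace ℝ (Fin T))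
    (u : ℝ → EuclideanSpace ℝ (Fin T) → ℝ)
    (gu : ℝ → EuclideanSpace ℝ (Fin T) → EuclideanSpace ℝ (Fin T))
    (hcstrong : ∀ X ∈ Ms, ∀ Y ∈ Ms, β * ‖X - Y‖ ^ 2 ≤ ⟪c X - c Y, X - Y⟫)
    (hconc : ∀ θ ∈ Set.Icc (0:ℝ) 1, ConcaveOn ℝ Ms (u θ))
    (hgrad : ∀ θ ∈ Set.Icc (0:ℝ) 1, ∀ x ∈ Ms, HasGradientAt (u θ) (gu θ x) x)
    (hgub : ∀ θ x, ‖gu θ x‖ ≤ L)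
    (hgumeas : ∀ x : ℝ → EuclideanSpace ℝ (Fin T), Measurable x →
      AEStronglyMeasurable (fun θ => gu θ (x θ)) μ01)
    (x y : ℝ → EuclideanSpace ℝ (Fin T)) (hxm : Measurable x) (hym : Measurable y)
    (hx : ∀ θ ∈ Set.Icc (0:ℝ) 1, x θ ∈ Ms) (hy : ∀ θ ∈ Set.Icc (0:ℝ) 1, y θ ∈ Ms) :
    β * ‖(∫ t, x t ∂μ01) - (∫ t, y t ∂μ01)‖ ^ 2 ≤
      ∫ θ, ⟪(c (∫ t, x t ∂μ01) - gu θ (x θ)) - (c (∫ t, y t ∂μ01) - gu θ (y θ)),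
            x θ - y θ⟫ ∂μ01 := by
  have hΘ : ∀ᵐ θ ∂μ01, θ ∈ Set.Icc (0:ℝ) 1 := ae_restrict_mem measurableSet_Icc
  have hxM : ∀ᵐ θ ∂μ01, x θ ∈ Ms := hΘ.mono hx
  have hyM : ∀ᵐ θ ∂μ01, y θ ∈ Ms := hΘ.mono hy
  have hxi : Integrable x μ01 :=
    .of_ae_mem_of_isBounded hxm.aestronglyMeasurable hMcomp.isBounded hxM
  have hyi : Integrable y μ01 :=
    .of_ae_mem_of_isBounded hym.aestronglyMeasurable hMcomp.isBounded hyM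
  have hgap_int : Integrable (fun θ => ⟪gu θ (y θ) - gu θ (x θ), x θ - y θ⟫) μ01 :=
    (hxi.sub hyi).bdd_inner ((hgumeas y hym).sub (hgumeas x hxm))
      (.of_forall fun θ => norm_sub_le_of_le (hgub θ _) (hgub θ _))
  have hgap_nonneg : ∀ᵐ θ ∂μ01, 0 ≤ ⟪gu θ (y θ) - gu θ (x θ), x θ - y θ⟫ :=
    hΘ.mono fun θ hθ => (hconc θ hθ).inner_sub_gradient_nonneg (hx θ hθ) (hy θ hθ)
      (hgrad θ hθ _ (hx θ hθ)) (hgrad θ hθ _ (hy θ hθ))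
  set X := ∫ t, x t ∂μ01
  set Y := ∫ t, y t ∂μ01
  have hsplit : ∀ θ, (c X - gu θ (x θ)) - (c Y - gu θ (y θ)) =
      (c X - c Y) + (gu θ (y θ) - gu θ (x θ)) := fun θ => by abel
  simp_rw [hsplit]
  calc β * ‖X - Y‖ ^ 2
      ≤ ⟪c X - c Y, X - Y⟫ := hcstrong _ (hMconv.integral_mem hMcomp.isClosed hxM hxi)
        _ (hMconv.integral_mem hMcomp.isClosed hyM hyi)
    _ ≤ _ := inner_sub_integral_le_integral_inner_add _ hxi hyi hgap_int hgap_nonneg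

/-- Proposition `prop:monotonemap` v: a public products game with costs
`f_θ(x,X) = ⟨x, c(X)⟩ - u_θ(x)` where `c` is strongly monotone with modulus `β` on `M` and
each `u_θ` is concave differentiable, is aggregatively strongly monotone with modulus `β`:
`∫ ⟨g_x(θ) - g_y(θ), x_θ - y_θ⟩ dθ ≥ β ‖∫x - ∫y‖²`. -/
theorem public_products_agg_strongly_monotone {T : ℕ} {L β : ℝ}
    (Ms : Set (EuclideanSpace ℝ (Fin T)))
    (hMconv : Convex ℝ Ms) (hMcomp : IsCompact Ms)
    (c : EuclideanSpace ℝ (Fin T) → EuclideanSpace ℝ (Fin T))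
    (u : ℝ → EuclideanSpace ℝ (Fin T) → ℝ)
    (gu : ℝ → EuclideanSpace ℝ (Fin T) → EuclideanSpace ℝ (Fin T))
    (hβ : 0 < β)
    (hcstrong : ∀ X ∈ Ms, ∀ Y ∈ Ms, β * ‖X - Y‖ ^ 2 ≤ ⟪c X - c Y, X - Y⟫)
    (hconc : ∀ θ ∈ Set.Icc (0:ℝ) 1, ConcaveOn ℝ Ms (u θ))
    (hgrad : ∀ θ ∈ Set.Icc (0:ℝ) 1, ∀ x ∈ Ms, HasGradientAt (u θ) (gu θ x) x)
    (hgub : ∀ θ x, ‖gu θ x‖ ≤ L)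
    (hgumeas : ∀ x : ℝ → EuclideanSpace ℝ (Fin T), Measurable x →
      AEStronglyMeasurable (fun θ => gu θ (x θ)) μ01)
    (x y : ℝ → EuclideanSpace ℝ (Fin T)) (hxm : Measurable x) (hym : Measurable y)
    (hx : ∀ θ ∈ Set.Icc (0:ℝ) 1, x θ ∈ Ms) (hy : ∀ θ ∈ Set.Icc (0:ℝ) 1, y θ ∈ Ms) :
    β * ‖(∫ t, x t ∂μ01) - (∫ t, y t ∂μ01)‖ ^ 2 ≤
      ∫ θ, ⟪(c (∫ t, x t ∂μ01) - gu θ (x θ)) - (c (∫ t, y t ∂μ01) - gu θ (y θ)),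
            x θ - y θ⟫ ∂μ01 :=
  public_products_agg_strongly_monotone_general Ms hMconv hMcomp c u gu hcstrong hconc hgrad hgub
    hgumeas x y hxm hym hx hy
end

section
/- In a public products game with f_θ(x_θ, X) = ⟨x_θ, c(X)⟩ − u_θ(x_θ), if each u_θ is strongly concave with modulus α_θ and inf_θ α_θ = α > 0, and c is monotone, then the game is strongly monotone with modulus α: ∫_Θ ⟨g_x(θ) − g_y(θ), x_θ − y_θ⟩ dθ ≥ α‖x − y‖²_{L²}. -/
open Metric MeasureTheory
open scoped RealInnerProductSpace

/-- Proposition `prop:monotonemap` iv: a public products game with costs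
`f_θ(x,X) = ⟨x, c(X)⟩ - u_θ(x)` where each `u_θ` is strongly concave with modulus `α_θ`,
`inf_θ α_θ = α > 0`, and `c` is monotone, is strongly monotone with modulus `α`:
`∫ ⟨g_x(θ) - g_y(θ), x_θ - y_θ⟩ dθ ≥ α ‖x - y‖²_{L²}`. -/
theorem public_products_strongly_monotone {T : ℕ} {L α : ℝ}
    (Ms : Set (EuclideanSpace ℝ (Fin T)))
    (hMconv : Convex ℝ Ms) (hMcomp : IsCompact Ms)
    (c : EuclideanSpace ℝ (Fin T) → EuclideanSpace ℝ (Fin T))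
    (u : ℝ → EuclideanSpace ℝ (Fin T) → ℝ)
    (gu : ℝ → EuclideanSpace ℝ (Fin T) → EuclideanSpace ℝ (Fin T))
    (αθ : ℝ → ℝ)
    (hα : 0 < α)
    (hαinf : ∀ θ ∈ Set.Icc (0:ℝ) 1, α ≤ αθ θ)
    (hcmono : ∀ X ∈ Ms, ∀ Y ∈ Ms, 0 ≤ ⟪c X - c Y, X - Y⟫)
    (hconc : ∀ θ ∈ Set.Icc (0:ℝ) 1, ConcaveOn ℝ Ms (u θ))
    -- strong concavity of `u θ` with modulus `αθ θ`, via monotonicity of its gradient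
    (hstrong : ∀ θ ∈ Set.Icc (0:ℝ) 1, ∀ x ∈ Ms, ∀ y ∈ Ms,
      ⟪gu θ x - gu θ y, x - y⟫ ≤ -(αθ θ) * ‖x - y‖ ^ 2)
    (hgrad : ∀ θ ∈ Set.Icc (0:ℝ) 1, ∀ x ∈ Ms, HasGradientAt (u θ) (gu θ x) x)
    (hgub : ∀ θ x, ‖gu θ x‖ ≤ L)
    (hgumeas : ∀ x : ℝ → EuclideanSpace ℝ (Fin T), Measurable x →
      AEStronglyMeasurable (fun θ => gu θ (x θ)) μ01)
    (x y : ℝ → EuclideanSpace ℝ (Fin T)) (hxm : Measurable x) (hym : Measurable y)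
    (hx : ∀ θ ∈ Set.Icc (0:ℝ) 1, x θ ∈ Ms) (hy : ∀ θ ∈ Set.Icc (0:ℝ) 1, y θ ∈ Ms) :
    α * (∫ θ, ‖x θ - y θ‖ ^ 2 ∂μ01) ≤
      ∫ θ, ⟪(c (∫ t, x t ∂μ01) - gu θ (x θ)) - (c (∫ t, y t ∂μ01) - gu θ (y θ)),
            x θ - y θ⟫ ∂μ01 := by
  have hprob : IsProbabilityMeasure μ01 := by
    constructor
    simp [μ01, Real.volume_Icc]
  have haeIcc : ∀ᵐ θ ∂μ01, θ ∈ Set.Icc (0:ℝ) 1 :=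
    ae_restrict_mem measurableSet_Icc
  -- bounds on Ms
  obtain ⟨R, hR⟩ := hMcomp.isBounded.exists_norm_le
  have hR0 : 0 ≤ R := le_trans (norm_nonneg _) (hR _ (hx 0 (by norm_num)))
  have hL0 : 0 ≤ L := le_trans (norm_nonneg _) (hgub 0 (x 0))
  -- integrability of x and y
  have hxint : Integrable x μ01 := by
    refine Integrable.mono' (integrable_const R) hxm.aestronglyMeasurable ?_
    filter_upwards [haeIcc] with θ hθ using hR _ (hx θ hθ)
  have hyint : Integrable y μ01 := by
    refine Integrable.mono' (integrable_const R) hym.aestronglyMeasurable ?_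
    filter_upwards [haeIcc] with θ hθ using hR _ (hy θ hθ)
  set X := ∫ t, x t ∂μ01 with hX
  set Y := ∫ t, y t ∂μ01 with hY
  have hXmem : X ∈ Ms := hMconv.integral_mem hMcomp.isClosed
    (by filter_upwards [haeIcc] with θ hθ using hx θ hθ) hxint
  have hYmem : Y ∈ Ms := hMconv.integral_mem hMcomp.isClosed
    (by filter_upwards [haeIcc] with θ hθ using hy θ hθ) hyint
  -- integrable functions
  have hdint : Integrable (fun θ => x θ - y θ) μ01 := hxint.sub hyint
  have hdmeas : AEStronglyMeasurable (fun θ => x θ - y θ) μ01 :=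
    (hxm.sub hym).aestronglyMeasurable
  have hdbound : ∀ᵐ θ ∂μ01, ‖x θ - y θ‖ ≤ 2 * R := by
    filter_upwards [haeIcc] with θ hθ
    calc ‖x θ - y θ‖ ≤ ‖x θ‖ + ‖y θ‖ := norm_sub_le _ _
      _ ≤ R + R := add_le_add (hR _ (hx θ hθ)) (hR _ (hy θ hθ))
      _ = 2 * R := by ring
  have hsqint : Integrable (fun θ => ‖x θ - y θ‖ ^ 2) μ01 := by
    refine Integrable.mono' (integrable_const ((2*R)^2))
      ((hdmeas.norm.pow 2)) ?_
    filter_upwards [hdbound] with θ hθ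
    have h0 : (0:ℝ) ≤ ‖x θ - y θ‖ := norm_nonneg _
    rw [Real.norm_eq_abs, abs_of_nonneg (by positivity)]
    exact pow_le_pow_left₀ h0 hθ 2
  -- the two sides pointwise
  set f1 : ℝ → ℝ := fun θ => α * ‖x θ - y θ‖ ^ 2 + ⟪c X - c Y, x θ - y θ⟫ with hf1
  set f2 : ℝ → ℝ := fun θ =>
    ⟪(c X - gu θ (x θ)) - (c Y - gu θ (y θ)), x θ - y θ⟫ with hf2
  have hf1int : Integrable f1 μ01 := by
    refine (hsqint.const_mul α).add ?_
    exact (hdint.const_inner _)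
  have hgmeas : AEStronglyMeasurable
      (fun θ => (c X - gu θ (x θ)) - (c Y - gu θ (y θ))) μ01 := by
    exact ((aestronglyMeasurable_const.sub (hgumeas x hxm)).sub
      (aestronglyMeasurable_const.sub (hgumeas y hym)))
  have hf2int : Integrable f2 μ01 := by
    refine Integrable.mono' (integrable_const ((‖c X‖ + ‖c Y‖ + 2*L) * (2*R)))
      (hgmeas.inner hdmeas) ?_
    filter_upwards [hdbound] with θ hθ
    have h1 : ‖(c X - gu θ (x θ)) - (c Y - gu θ (y θ))‖ ≤ ‖c X‖ + ‖c Y‖ + 2*L := by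
      calc ‖(c X - gu θ (x θ)) - (c Y - gu θ (y θ))‖
          ≤ ‖c X - gu θ (x θ)‖ + ‖c Y - gu θ (y θ)‖ := norm_sub_le _ _
        _ ≤ (‖c X‖ + ‖gu θ (x θ)‖) + (‖c Y‖ + ‖gu θ (y θ)‖) :=
            add_le_add (norm_sub_le _ _) (norm_sub_le _ _)
        _ ≤ (‖c X‖ + L) + (‖c Y‖ + L) :=
            add_le_add (add_le_add le_rfl (hgub _ _)) (add_le_add le_rfl (hgub _ _))
        _ = ‖c X‖ + ‖c Y‖ + 2*L := by ring
    calc ‖f2 θ‖ ≤ ‖(c X - gu θ (x θ)) - (c Y - gu θ (y θ))‖ * ‖x θ - y θ‖ := by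
          rw [Real.norm_eq_abs]; exact abs_real_inner_le_norm _ _
      _ ≤ (‖c X‖ + ‖c Y‖ + 2*L) * (2*R) := by
          apply mul_le_mul h1 hθ (norm_nonneg _)
          positivity
  -- pointwise inequality
  have hpt : ∀ᵐ θ ∂μ01, f1 θ ≤ f2 θ := by
    filter_upwards [haeIcc] with θ hθ
    have hxM := hx θ hθ
    have hyM := hy θ hθ
    have hkey := hstrong θ hθ _ hxM _ hyM
    have hαle := hαinf θ hθ
    have hsq : (0:ℝ) ≤ ‖x θ - y θ‖ ^ 2 := by positivity
    have hrw : f2 θ = ⟪c X - c Y, x θ - y θ⟫ - ⟪gu θ (x θ) - gu θ (y θ), x θ - y θ⟫ := by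
      simp only [hf2]
      rw [← inner_sub_left]
      congr 1
      abel
    rw [hrw, hf1]
    dsimp only
    have : α * ‖x θ - y θ‖ ^ 2 ≤ - ⟪gu θ (x θ) - gu θ (y θ), x θ - y θ⟫ := by
      have h2 : α * ‖x θ - y θ‖ ^ 2 ≤ αθ θ * ‖x θ - y θ‖ ^ 2 :=
        mul_le_mul_of_nonneg_right hαle hsq
      nlinarith [hkey]
    linarith
  -- put it together
  have hmain : ∫ θ, f1 θ ∂μ01 ≤ ∫ θ, f2 θ ∂μ01 :=
    integral_mono_ae hf1int hf2int hpt
  have hsplit : ∫ θ, f1 θ ∂μ01 =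
      α * (∫ θ, ‖x θ - y θ‖ ^ 2 ∂μ01) + ⟪c X - c Y, X - Y⟫ := by
    rw [hf1, integral_add (hsqint.const_mul α) (hdint.const_inner _),
      integral_const_mul, integral_inner hdint, integral_sub hxint hyint]
  have hpos : 0 ≤ ⟪c X - c Y, X - Y⟫ := hcmono X hXmem Y hYmem
  calc α * (∫ θ, ‖x θ - y θ‖ ^ 2 ∂μ01)
      ≤ α * (∫ θ, ‖x θ - y θ‖ ^ 2 ∂μ01) + ⟪c X - c Y, X - Y⟫ := le_add_of_nonneg_right hpos
    _ = ∫ θ, f1 θ ∂μ01 := hsplit.symm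
    _ ≤ ∫ θ, f2 θ ∂μ01 := hmain
end

section
/- In a finite-type nonatomic aggregative game with type partition (Θ_i)_{i∈I} of [0,1] with measures μ_i, a symmetric feasible profile x̂ (constant on each Θ_i, with value x̂_i ∈ X_i, aggregate in A) is a variational Wardrop equilibrium if and only if it solves the finite-dimensional variational inequality: Σ_{i∈I} ⟨∇₁f_i(x̂_i, Σ_j μ_j x̂_j), μ_i x_i − μ_i x̂_i⟩ ≥ 0 for all symmetric feasible profiles (x_i)_{i∈I} with x_i ∈ X_i and Σ_i μ_i x_i ∈ A. -/
open Metric MeasureTheory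
open scoped RealInnerProductSpace

/-! On each type `Θp i`, both the aggregate `∫ z` and the variational gap of a profile `z` depend
on `z` only through its integral over `Θp i`, which is `μ_i • w i` for a symmetric profile `w`.
Conversely, a feasible `z` has the same type integrals as the symmetric profile of its averages
over the types, and these averages lie in `X_i` because `X_i` is convex and closed (on a null type
any point of `X_i` will do). So both inequalities quantify over the same set of gaps. -/

namespace MeasureTheory

variable {α κ E : Type*} [MeasurableSpace α] {μ : Measure α} [NormedAddCommGroup E]

theorem IntegrableOn.of_ae_mem_isCompact {s : Set α} {K : Set E} {f : α → E}
    (hK : IsCompact K) (hμs : μ s ≠ ⊤) (hf : AEStronglyMeasurable f (μ.restrict s))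
    (hfK : ∀ᵐ x ∂μ.restrict s, f x ∈ K) : IntegrableOn f s μ := by
  obtain ⟨C, hC⟩ := isBounded_iff_forall_norm_le.mp hK.isBounded
  exact .of_bound hμs.lt_top hf C (hfK.mono fun x hx => hC _ hx)

theorem exists_mem_measureReal_smul_eq_setIntegral [NormedSpace ℝ E] [CompleteSpace E]
    {s : Set α} {K : Set E} {f : α → E} (hK : Convex ℝ K) (hKc : IsClosed K) (hKne : K.Nonempty)
    (hμs : μ s ≠ ⊤) (hf : IntegrableOn f s μ) (hfK : ∀ᵐ x ∂μ.restrict s, f x ∈ K) :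
    ∃ y ∈ K, μ.real s • y = ∫ x in s, f x ∂μ := by
  by_cases h0 : μ s = 0
  · obtain ⟨y, hy⟩ := hKne
    exact ⟨y, hy, by simp [Measure.restrict_eq_zero.mpr h0, measureReal_def, h0]⟩
  · exact ⟨_, hK.set_average_mem hKc h0 hμs hfK hf, measure_smul_setAverage f hμs⟩

section PiecewiseConstant

open Function

variable {τ : α → κ}

theorem integrableOn_comp_of_eqOn {s : Set α} {i : κ} (hs : MeasurableSet s) (hμs : μ s ≠ ⊤)
    (hτ : ∀ x ∈ s, τ x = i) (F : κ → E) : IntegrableOn (fun x => F (τ x)) s μ :=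
  (integrableOn_const hμs).congr_fun (fun x hx => congrArg F (hτ x hx).symm) hs

theorem setIntegral_comp_of_eqOn [NormedSpace ℝ E] [CompleteSpace E] {s : Set α} {i : κ}
    (hs : MeasurableSet s) (hτ : ∀ x ∈ s, τ x = i) (F : κ → E) :
    ∫ x in s, F (τ x) ∂μ = μ.real s • F i := by
  rw [setIntegral_congr_fun hs fun x hx => congrArg F (hτ x hx), setIntegral_const]

variable [Fintype κ] {s : κ → Set α}

theorem integral_iUnion_comp [NormedSpace ℝ E] [CompleteSpace E] (hs : ∀ i, MeasurableSet (s i))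
    (hdisj : Pairwise (Disjoint on s)) (hμs : ∀ i, μ (s i) ≠ ⊤) (hτ : ∀ i, ∀ x ∈ s i, τ x = i)
    (F : κ → E) :
    ∫ x in ⋃ i, s i, F (τ x) ∂μ = ∑ i, μ.real (s i) • F i := by
  rw [integral_iUnion_fintype hs hdisj fun i => integrableOn_comp_of_eqOn (hs i) (hμs i) (hτ i) F]
  exact Finset.sum_congr rfl fun i _ => setIntegral_comp_of_eqOn (hs i) (hτ i) F

theorem integral_iUnion_inner_comp_sub [InnerProductSpace ℝ E] [CompleteSpace E]
    (hs : ∀ i, MeasurableSet (s i)) (hdisj : Pairwise (Disjoint on s)) (hμs : ∀ i, μ (s i) ≠ ⊤)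
    (hτ : ∀ i, ∀ x ∈ s i, τ x = i)
    (G F : κ → E) {f : α → E} (hf : ∀ i, IntegrableOn f (s i) μ) :
    ∫ x in ⋃ i, s i, ⟪G (τ x), f x - F (τ x)⟫ ∂μ
      = ∑ i, ⟪G i, (∫ x in s i, f x ∂μ) - μ.real (s i) • F i⟫ := by
  have hF i := integrableOn_comp_of_eqOn (hs i) (hμs i) (hτ i) F
  have hfF i : IntegrableOn (fun x => f x - F (τ x)) (s i) μ := (hf i).sub (hF i)
  have hG i : Set.EqOn (fun x => ⟪G (τ x), f x - F (τ x)⟫) (fun x => ⟪G i, f x - F (τ x)⟫)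
      (s i) := fun x hx => by simp only [hτ i x hx]
  have hint i : IntegrableOn (fun x => ⟪G i, f x - F (τ x)⟫) (s i) μ :=
    (hfF i).const_inner (G i)
  rw [integral_iUnion_fintype hs hdisj fun i => (hint i).congr_fun (hG i).symm (hs i)]
  refine Finset.sum_congr rfl fun i _ => ?_
  rw [setIntegral_congr_fun (hs i) (hG i), integral_inner (hfF i),
    integral_sub (hf i) (hF i), setIntegral_comp_of_eqOn (hs i) (hτ i)]

end PiecewiseConstant

end MeasureTheory

theorem SVWE_iff_finite_VI_general {T I : ℕ}
    (Θp : Fin I → Set ℝ) (ι : ℝ → Fin I)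
    (Xi : Fin I → Set (EuclideanSpace ℝ (Fin T)))
    (A : Set (EuclideanSpace ℝ (Fin T)))
    (gi : Fin I → EuclideanSpace ℝ (Fin T) → EuclideanSpace ℝ (Fin T) →
      EuclideanSpace ℝ (Fin T))
    (hΘmeas : ∀ i, MeasurableSet (Θp i))
    (hΘdisj : ∀ i j, i ≠ j → Disjoint (Θp i) (Θp j))
    (hΘcover : (⋃ i, Θp i) = Set.Icc (0:ℝ) 1)
    (hι : ∀ i, ∀ θ ∈ Θp i, ι θ = i) (hιmeas : Measurable ι)
    (hXiconv : ∀ i, Convex ℝ (Xi i))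
    (hXicomp : ∀ i, IsCompact (Xi i))
    (v : Fin I → EuclideanSpace ℝ (Fin T))
    (hv : ∀ i, v i ∈ Xi i) :
    -- the symmetric profile `θ ↦ v (ι θ)` is a VWE ...
    (∀ z : ℝ → EuclideanSpace ℝ (Fin T), Measurable z →
        (∀ i, ∀ θ ∈ Θp i, z θ ∈ Xi i) → (∫ θ, z θ ∂μ01) ∈ A →
        0 ≤ ∫ θ, ⟪gi (ι θ) (v (ι θ)) (∫ t, v (ι t) ∂μ01), z θ - v (ι θ)⟫ ∂μ01)
    ↔
    -- ... iff it solves the finite-dimensional variational inequality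
    (∀ w : Fin I → EuclideanSpace ℝ (Fin T), (∀ i, w i ∈ Xi i) →
        (∑ i, (volume (Θp i)).toReal • w i) ∈ A →
        0 ≤ ∑ i, ⟪gi i (v i) (∑ j, (volume (Θp j)).toReal • v j),
                  (volume (Θp i)).toReal • w i - (volume (Θp i)).toReal • v i⟫) := by
  have hμ01 : μ01 = volume.restrict (⋃ i, Θp i) := by rw [hΘcover]; rfl
  have hfin i : volume (Θp i) ≠ ⊤ :=
    ((measure_mono ((Set.subset_iUnion Θp i).trans hΘcover.le)).trans_lt measure_Icc_lt_top).ne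
  have hdisj : Pairwise (Function.onFun Disjoint Θp) := fun i j hij => hΘdisj i j hij
  simp only [hμ01, ← measureReal_def, integral_iUnion_comp hΘmeas hdisj hfin hι v]
  have hmean (z : ℝ → EuclideanSpace ℝ (Fin T)) (w : Fin I → EuclideanSpace ℝ (Fin T))
      (hz : ∀ i, IntegrableOn z (Θp i))
      (hzw : ∀ i, ∫ θ in Θp i, z θ = volume.real (Θp i) • w i) :
      ∫ θ in ⋃ i, Θp i, z θ = ∑ i, volume.real (Θp i) • w i ∧
      ∫ θ in ⋃ i, Θp i, ⟪gi (ι θ) (v (ι θ)) (∑ j, volume.real (Θp j) • v j), z θ - v (ι θ)⟫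
        = ∑ i, ⟪gi i (v i) (∑ j, volume.real (Θp j) • v j),
            volume.real (Θp i) • w i - volume.real (Θp i) • v i⟫ := by
    refine ⟨?_, ?_⟩
    · rw [integral_iUnion_fintype hΘmeas hdisj hz]
      exact Finset.sum_congr rfl fun i _ => hzw i
    · rw [integral_iUnion_inner_comp_sub hΘmeas hdisj hfin hι
        (fun i => gi i (v i) (∑ j, volume.real (Θp j) • v j)) v hz]
      simp only [hzw]
  constructor
  · intro hVWE w hw hwA
    obtain ⟨hagg, hgap⟩ := hmean (fun θ => w (ι θ)) w
      (fun i => integrableOn_comp_of_eqOn (hΘmeas i) (hfin i) (hι i) w)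
      (fun i => setIntegral_comp_of_eqOn (hΘmeas i) (hι i) w)
    rw [← hgap]
    exact hVWE _ ((Measurable.of_discrete (f := w)).comp hιmeas)
      (fun i θ hθ => hι i θ hθ ▸ hw i) (hagg ▸ hwA)
  · intro hVI z hzm hzX hzA
    have hzK i : ∀ᵐ θ ∂volume.restrict (Θp i), z θ ∈ Xi i :=
      (ae_restrict_mem (hΘmeas i)).mono (hzX i)
    have hz i : IntegrableOn z (Θp i) :=
      .of_ae_mem_isCompact (hXicomp i) (hfin i) hzm.aestronglyMeasurable (hzK i)
    choose w hwX hw using fun i => exists_mem_measureReal_smul_eq_setIntegral (hXiconv i)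
      (hXicomp i).isClosed ⟨v i, hv i⟩ (hfin i) (hz i) (hzK i)
    obtain ⟨hagg, hgap⟩ := hmean z w hz fun i => (hw i).symm
    exact hgap ▸ hVI w hwX (hagg ▸ hzA)

/-- Proposition `prop:SVWEfiniteChar`: in a finite-type nonatomic aggregative
game with aggregative constraint, a symmetric feasible profile (constant equal to `v i` on
each `Θ_i`) is a variational Wardrop equilibrium iff it solves the finite-dimensional
variational inequality `Σ_i ⟨∇₁f_i(v_i, Σ_j μ_j v_j), μ_i w_i - μ_i v_i⟩ ≥ 0` over
symmetric feasible profiles. -/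
theorem SVWE_iff_finite_VI {T I : ℕ}
    (Θp : Fin I → Set ℝ) (ι : ℝ → Fin I)
    (Xi : Fin I → Set (EuclideanSpace ℝ (Fin T)))
    (A : Set (EuclideanSpace ℝ (Fin T)))
    (gi : Fin I → EuclideanSpace ℝ (Fin T) → EuclideanSpace ℝ (Fin T) →
      EuclideanSpace ℝ (Fin T))
    (hΘmeas : ∀ i, MeasurableSet (Θp i))
    (hΘdisj : ∀ i j, i ≠ j → Disjoint (Θp i) (Θp j))
    (hΘcover : (⋃ i, Θp i) = Set.Icc (0:ℝ) 1)
    (hι : ∀ i, ∀ θ ∈ Θp i, ι θ = i) (hιmeas : Measurable ι)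
    (hXine : ∀ i, (Xi i).Nonempty) (hXiconv : ∀ i, Convex ℝ (Xi i))
    (hXicomp : ∀ i, IsCompact (Xi i))
    (hAconv : Convex ℝ A) (hAcomp : IsCompact A)
    (hgicont : ∀ i, Continuous fun p : EuclideanSpace ℝ (Fin T) × EuclideanSpace ℝ (Fin T)
      => gi i p.1 p.2)
    (v : Fin I → EuclideanSpace ℝ (Fin T))
    (hv : ∀ i, v i ∈ Xi i)
    (hvA : (∑ i, (volume (Θp i)).toReal • v i) ∈ A) :
    -- the symmetric profile `θ ↦ v (ι θ)` is a VWE ...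
    (∀ z : ℝ → EuclideanSpace ℝ (Fin T), Measurable z →
        (∀ i, ∀ θ ∈ Θp i, z θ ∈ Xi i) → (∫ θ, z θ ∂μ01) ∈ A →
        0 ≤ ∫ θ, ⟪gi (ι θ) (v (ι θ)) (∫ t, v (ι t) ∂μ01), z θ - v (ι θ)⟫ ∂μ01)
    ↔
    -- ... iff it solves the finite-dimensional variational inequality
    (∀ w : Fin I → EuclideanSpace ℝ (Fin T), (∀ i, w i ∈ Xi i) →
        (∑ i, (volume (Θp i)).toReal • w i) ∈ A →
        0 ≤ ∑ i, ⟪gi i (v i) (∑ j, (volume (Θp j)).toReal • v j),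
                  (volume (Θp i)).toReal • w i - (volume (Θp i)).toReal • v i⟫) :=
  SVWE_iff_finite_VI_general Θp ι Xi A gi hΘmeas hΘdisj hΘcover hι hιmeas hXiconv hXicomp v hv
end

section
/- Let X and X' be nonempty convex subsets of R^T with the same linear span, and suppose the Hausdorff distance d_H(X, X') ≤ d. If x ∈ X' satisfies d(x, rbd X') > d (distance to the relative boundary of X'), then x ∈ X. -/
open Metric

/-- The relative boundary of a set `C ⊂ ℝ^T`: its boundary within `span C`, i.e. points of
the closure of `C` that are not in the relative interior of `C`. -/
def rbd {T : ℕ} (C : Set (EuclideanSpace ℝ (Fin T))) : Set (EuclideanSpace ℝ (Fin T)) :=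
  closure C \
    {y | ∃ ε > 0, Metric.ball y ε ∩ (Submodule.span ℝ C : Set (EuclideanSpace ℝ (Fin T))) ⊆ C}

/-!
Put `V = span X = span X'` and `r = d(x, rbd X')`. The convex, hence connected, set
`B(x, r) ∩ V` meets no point of `rbd X'`, so `closure X'` is relatively clopen in it and contains
it. If some `y ∈ B(x, r - d) ∩ V` were outside `closure X`, pushing `y` away from its nearest
point `p` of `closure X` by a length `t ∈ (d, r - |y - x|)` would give a point `w ∈ B(x, r) ∩ V`,
so `w ∈ closure X'`, with `d(w, X) ≥ |y - p| + t > d`, contradicting `d_H(X, X') ≤ d`. Thus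
`x` lies in the interior of `closure X` relative to `V`, which for a convex set is contained
in `X`.
-/

open Set

theorem IsPreconnected.subset_of_inter_subset_of_inter_subset {α : Type*} [TopologicalSpace α]
    {s F U : Set α} (hs : IsPreconnected s) (hF : IsClosed F) (hU : IsOpen U)
    (hsF : s ∩ F ⊆ U) (hsU : s ∩ U ⊆ F) (hne : (s ∩ F).Nonempty) : s ⊆ F := by
  have hcover : s ⊆ U ∪ Fᶜ := fun q hq ↦ by
    by_cases hqF : q ∈ F
    · exact Or.inl (hsF ⟨hq, hqF⟩)
    · exact Or.inr hqF
  have hdisj : s ∩ (U ∩ Fᶜ) = ∅ :=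
    eq_empty_of_forall_notMem fun q ⟨hq, hqU, hqF⟩ ↦ hqF (hsU ⟨hq, hqU⟩)
  rcases isPreconnected_iff_subset_of_disjoint.1 hs U Fᶜ hU hF.isOpen_compl hcover hdisj
    with hsU' | hsF'
  · exact fun q hq ↦ hsU ⟨hq, hsU' hq⟩
  · obtain ⟨q, hq, hqF⟩ := hne
    exact absurd hqF (hsF' hq)

theorem ball_inter_span_subset_closure {T : ℕ} {C : Set (EuclideanSpace ℝ (Fin T))}
    {x : EuclideanSpace ℝ (Fin T)} (hx : x ∈ closure C) :
    ball x (infDist x (rbd C)) ∩ (Submodule.span ℝ C : Set (EuclideanSpace ℝ (Fin T))) ⊆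
      closure C := by
  set V : Set (EuclideanSpace ℝ (Fin T)) := ↑(Submodule.span ℝ C)
  set s := ball x (infDist x (rbd C)) ∩ V
  have hconn : IsPreconnected s :=
    ((convex_ball x _).inter (Submodule.span ℝ C).convex).isPreconnected
  -- `interior (closure C ∪ Vᶜ)` is the largest open `U` with `U ∩ V ⊆ closure C`.
  have hsF : s ∩ closure C ⊆ interior (closure C ∪ Vᶜ) := by
    rintro q ⟨⟨hqx, -⟩, hqC⟩
    have hq : q ∉ rbd C := fun hq ↦
      (infDist_le_dist_of_mem hq).not_gt (by rwa [mem_ball, dist_comm] at hqx)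
    obtain ⟨ε, hε, hsub⟩ : ∃ ε > 0, ball q ε ∩ V ⊆ C := not_not.1 fun h ↦ hq ⟨hqC, h⟩
    refine interior_maximal (fun w hw ↦ ?_) isOpen_ball (mem_ball_self hε)
    by_cases hwV : w ∈ V
    · exact Or.inl (subset_closure (hsub ⟨hw, hwV⟩))
    · exact Or.inr hwV
  have hsU : s ∩ interior (closure C ∪ Vᶜ) ⊆ closure C := fun q ⟨⟨_, hqV⟩, hqU⟩ ↦
    (interior_subset hqU).resolve_right (not_not.2 hqV)
  intro y hy
  have hxs : x ∈ s := ⟨mem_ball_self (pos_of_mem_ball hy.1), closure_minimal Submodule.subset_span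
    (Submodule.span ℝ C).closed_of_finiteDimensional hx⟩
  exact hconn.subset_of_inter_subset_of_inter_subset isClosed_closure isOpen_interior hsF hsU
    ⟨x, hxs, hx⟩ hy

theorem mul_norm_sub_le_norm_add_smul_sub_of_inner_nonpos {E : Type*}
    [NormedAddCommGroup E] [InnerProductSpace ℝ E] {y p z : E} {s : ℝ}
    (h : inner ℝ (y - p) (z - p) ≤ 0) :
    (1 + s) * ‖y - p‖ ≤ ‖y + s • (y - p) - z‖ := by
  have hinner : inner ℝ (y + s • (y - p) - z) (y - p) =
      (1 + s) * ‖y - p‖ ^ 2 - inner ℝ (y - p) (z - p) := by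
    rw [show y + s • (y - p) - z = (1 + s) • (y - p) - (z - p) by module, inner_sub_left,
      real_inner_smul_left, real_inner_self_eq_norm_sq, real_inner_comm]
  have hcs := real_inner_le_norm (y + s • (y - p) - z) (y - p)
  rcases (norm_nonneg (y - p)).eq_or_lt with h0 | hpos
  · rw [← h0, mul_zero]
    exact norm_nonneg _
  · exact le_of_mul_le_mul_right (by nlinarith) hpos

theorem ball_inter_subset_closure_of_hausdorffDist_le {E : Type*} [NormedAddCommGroup E]
    [InnerProductSpace ℝ E] [CompleteSpace E] {V : Submodule ℝ E} (hV : IsClosed (V : Set E))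
    {X A : Set E} (hXne : X.Nonempty) (hXconv : Convex ℝ X) (hXV : X ⊆ V)
    (hfin : hausdorffEDist X A ≠ ⊤) {d : ℝ} (hH : hausdorffDist X A ≤ d) {x : E} {r : ℝ}
    (hA : ball x r ∩ V ⊆ closure A) :
    ball x (r - d) ∩ V ⊆ closure X := by
  rintro y ⟨hyx, hyV⟩
  by_contra hyX
  obtain ⟨p, hpX, hpmin⟩ := exists_norm_eq_iInf_of_complete_convex hXne.closure
    isClosed_closure.isComplete hXconv.closure y
  have hproj := (norm_eq_iInf_iff_real_inner_le_zero hXconv.closure hpX).1 hpmin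
  have hm : 0 < ‖y - p‖ := norm_sub_pos_iff.2 fun h ↦ hyX (h ▸ hpX)
  obtain ⟨t, hdt, htr⟩ := exists_between (lt_sub_comm.1 (mem_ball.1 hyx))
  have ht : 0 ≤ t / ‖y - p‖ :=
    div_nonneg (hausdorffDist_nonneg.trans (hH.trans hdt.le)) hm.le
  set w := y + (t / ‖y - p‖) • (y - p)
  have hwA : w ∈ closure A := by
    refine hA ⟨?_, V.add_mem hyV (V.smul_mem _ (V.sub_mem hyV (closure_minimal hXV hV hpX)))⟩
    rw [mem_ball, dist_comm]
    calc dist x w ≤ dist x y + dist y w := dist_triangle _ _ _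
      _ = dist x y + t := by
        rw [dist_self_add_right, norm_smul, Real.norm_of_nonneg ht, div_mul_cancel₀ _ hm.ne']
      _ < r := by rw [dist_comm]; linarith
  have hnear : infDist w X ≤ d := by
    have := infDist_le_infDist_add_hausdorffDist (x := w) (by rwa [hausdorffEDist_comm] at hfin)
    rw [infDist_zero_of_mem_closure hwA, hausdorffDist_comm] at this
    linarith
  have hfar : ‖y - p‖ + t ≤ infDist w X := (le_infDist hXne).2 fun z hz ↦ by
    rw [dist_eq_norm]
    have := mul_norm_sub_le_norm_add_smul_sub_of_inner_nonpos (s := t / ‖y - p‖)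
      (hproj z (subset_closure hz))
    rwa [add_mul, one_mul, div_mul_cancel₀ _ hm.ne'] at this
  linarith

theorem Convex.mem_of_mem_interior_closure {E : Type*} [NormedAddCommGroup E]
    [NormedSpace ℝ E] [FiniteDimensional ℝ E] {C : Set E} (hC : Convex ℝ C) {x : E}
    (hx : x ∈ interior (closure C)) : x ∈ C := by
  have hspan : affineSpan ℝ C = ⊤ := by
    refine top_unique ?_
    rw [← hC.closure.interior_nonempty_iff_affineSpan_eq_top.1 ⟨x, hx⟩]
    exact affineSpan_le.2 (closure_minimal (subset_affineSpan ℝ C)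
      (affineSpan ℝ C).closed_of_finiteDimensional)
  rw [hC.interior_closure_eq_interior_of_nonempty_interior
    (hC.interior_nonempty_iff_affineSpan_eq_top.2 hspan)] at hx
  exact interior_subset hx

theorem Convex.mem_of_ball_inter_subset_closure {E : Type*} [NormedAddCommGroup E]
    [NormedSpace ℝ E] [FiniteDimensional ℝ E] {V : Submodule ℝ E} {X : Set E} (hX : Convex ℝ X)
    (hXV : X ⊆ V) {x : E} (hxV : x ∈ V) {ρ : ℝ} (hρ : 0 < ρ)
    (hball : ball x ρ ∩ V ⊆ closure X) : x ∈ X := by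
  suffices (⟨x, hxV⟩ : V) ∈ ((↑) ⁻¹' X : Set V) from this
  refine (hX.linear_preimage V.subtype).mem_of_mem_interior_closure <|
    mem_interior_iff_mem_nhds.2 <| Filter.mem_of_superset (ball_mem_nhds _ hρ) fun y hy ↦ ?_
  rw [closure_subtype, V.coe_subtype, image_preimage_eq_of_subset (by simpa using hXV)]
  exact hball ⟨hy, y.2⟩

theorem mem_of_infDist_rbd_gt_general {T : ℕ} {X X' : Set (EuclideanSpace ℝ (Fin T))} {d : ℝ}
    (hXne : X.Nonempty)
    (hXconv : Convex ℝ X)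
    (hspan : Submodule.span ℝ X = Submodule.span ℝ X')
    (hfin : EMetric.hausdorffEdist X X' ≠ ⊤)
    (hH : Metric.hausdorffDist X X' ≤ d)
    {x : EuclideanSpace ℝ (Fin T)} (hx : x ∈ X')
    (hdist : d < Metric.infDist x (rbd X')) :
    x ∈ X := by
  have hXV : X ⊆ Submodule.span ℝ X' := hspan ▸ Submodule.subset_span
  have hX' := ball_inter_span_subset_closure (subset_closure hx)
  have hX := ball_inter_subset_closure_of_hausdorffDist_le
    (Submodule.span ℝ X').closed_of_finiteDimensional hXne hXconv hXV hfin hH hX'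
  exact hXconv.mem_of_ball_inter_subset_closure hXV (Submodule.subset_span hx) (sub_pos.2 hdist) hX

/-- Lemma `lm:FY` iii/iv: let `X, X'` be nonempty convex subsets of `ℝ^T`
with the same linear span and Hausdorff distance at most `d`. If `x ∈ X'` has distance to
the relative boundary of `X'` greater than `d`, then `x ∈ X`. -/
theorem mem_of_infDist_rbd_gt {T : ℕ} {X X' : Set (EuclideanSpace ℝ (Fin T))} {d : ℝ}
    (hXne : X.Nonempty) (hX'ne : X'.Nonempty)
    (hXconv : Convex ℝ X) (hX'conv : Convex ℝ X')
    (hspan : Submodule.span ℝ X = Submodule.span ℝ X')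
    (hfin : EMetric.hausdorffEdist X X' ≠ ⊤)
    (hH : Metric.hausdorffDist X X' ≤ d)
    {x : EuclideanSpace ℝ (Fin T)} (hx : x ∈ X')
    (hdist : d < Metric.infDist x (rbd X')) :
    x ∈ X :=
  mem_of_infDist_rbd_gt_general hXne hXconv hspan hfin hH hx hdist
end

section
/- Let x ∈ L²([0,1], R^T) be measurable with x_θ ∈ X_θ for all θ, where the correspondence θ ↦ X_θ has nonempty convex compact values. For a finite partition (Θ_i)_i of [0,1] with Lebesgue measures μ_i > 0 and convex compact sets X_i ⊂ R^T such that sup_{θ∈Θ_i} d_H(X_θ, X_i) ≤ d_i for each i, let ψ(x) be the profile equal on each Θ_i to (1/μ_i)∫_{Θ_i} x_ξ dξ. Then the L²-distance from ψ(x) to the set of symmetric profiles y (constant y_i ∈ X_i on each Θ_i) is at most max_i d_i. -/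
/-!
On each piece `Θ_i` every `x_θ` lies in the closed `d_i`-thickening of `X_i`, because
`d_H(X_θ, X_i) ≤ d_i`. That thickening is closed and convex, so it also contains the mean of `x`
over `Θ_i`; as `X_i` is compact, the mean is then within `d_i ≤ D` of some `v_i ∈ X_i`. The
symmetric profile `v` is thus pointwise within `D` of `ψ(x)`, and `Θ` has measure one.
-/

open Metric MeasureTheory

section Metric

variable {α : Type*} [PseudoMetricSpace α]

theorem Metric.mem_cthickening_of_hausdorffDist_le {s t : Set α} {x : α} {δ : ℝ} (hx : x ∈ s)
    (hfin : hausdorffEDist s t ≠ ⊤) (h : hausdorffDist s t ≤ δ) : x ∈ cthickening δ t := by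
  rw [mem_cthickening_iff]
  calc infEDist x t ≤ hausdorffEDist s t := infEDist_le_hausdorffEDist_of_mem hx
    _ = ENNReal.ofReal (hausdorffDist s t) := (ENNReal.ofReal_toReal hfin).symm
    _ ≤ ENNReal.ofReal δ := ENNReal.ofReal_le_ofReal h

theorem IsCompact.exists_dist_le_of_mem_cthickening {K : Set α} {δ : ℝ} {c : α}
    (hK : IsCompact K) (hδ : 0 ≤ δ) (hc : c ∈ cthickening δ K) : ∃ v ∈ K, dist c v ≤ δ := by
  rw [hK.cthickening_eq_biUnion_closedBall hδ] at hc
  simpa only [Set.mem_iUnion₂, mem_closedBall, exists_prop] using hc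

end Metric

section Average

variable {α E : Type*} [MeasurableSpace α] [NormedAddCommGroup E] [NormedSpace ℝ E]
  [CompleteSpace E] {μ : Measure α}

theorem IsCompact.exists_dist_setAverage_le {s : Set α} {K : Set E} {f : α → E} {δ : ℝ}
    (hKc : IsCompact K) (hK : Convex ℝ K) (hδ : 0 ≤ δ) (hμ0 : μ s ≠ 0) (hμ : μ s ≠ ⊤)
    (hf : IntegrableOn f s μ) (hfK : ∀ᵐ a ∂μ.restrict s, f a ∈ cthickening δ K) :
    ∃ v ∈ K, dist (⨍ a in s, f a ∂μ) v ≤ δ :=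
  hKc.exists_dist_le_of_mem_cthickening hδ
    ((hK.cthickening δ).set_average_mem isClosed_cthickening hμ0 hμ hfK hf)

theorem integral_le_of_ae_norm_le [IsProbabilityMeasure μ] {f : α → ℝ} {C : ℝ}
    (h : ∀ᵐ a ∂μ, ‖f a‖ ≤ C) : ∫ a, f a ∂μ ≤ C := by
  simpa using (le_abs_self _).trans (norm_integral_le_of_norm_le_const h)

end Average

instance inst_s12 : IsProbabilityMeasure μ01 := ⟨by simp [μ01]⟩

theorem averaged_profile_close_to_symmetric_general {T I : ℕ} {R : ℝ}
    (𝒳 : ℝ → Set (EuclideanSpace ℝ (Fin T)))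
    (Θp : Fin I → Set ℝ) (ι : ℝ → Fin I)
    (Xi : Fin I → Set (EuclideanSpace ℝ (Fin T)))
    (d : Fin I → ℝ) (D : ℝ)
    (hΘmeas : ∀ i, MeasurableSet (Θp i))
    (hΘcover : (⋃ i, Θp i) = Set.Icc (0:ℝ) 1)
    (hμpos : ∀ i, 0 < (volume (Θp i)).toReal)
    (hι : ∀ i, ∀ θ ∈ Θp i, ι θ = i)
    (hXbd : ∀ θ ∈ Set.Icc (0:ℝ) 1, 𝒳 θ ⊆ Metric.closedBall 0 R)
    (hXine : ∀ i, (Xi i).Nonempty) (hXiconv : ∀ i, Convex ℝ (Xi i))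
    (hXicomp : ∀ i, IsCompact (Xi i))
    (hH : ∀ i, ∀ θ ∈ Θp i, Metric.hausdorffDist (𝒳 θ) (Xi i) ≤ d i)
    (hD : ∀ i, d i ≤ D)
    (x : ℝ → EuclideanSpace ℝ (Fin T)) (hxm : Measurable x)
    (hxf : ∀ θ ∈ Set.Icc (0:ℝ) 1, x θ ∈ 𝒳 θ) :
    ∃ v : Fin I → EuclideanSpace ℝ (Fin T), (∀ i, v i ∈ Xi i) ∧
      (∫ θ, ‖((volume (Θp (ι θ))).toReal)⁻¹ • (∫ ξ in Θp (ι θ), x ξ) - v (ι θ)‖ ^ 2 ∂μ01)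
        ≤ D ^ 2 := by
  have hsub (i) : Θp i ⊆ Set.Icc 0 1 := hΘcover ▸ Set.subset_iUnion Θp i
  have hμ0 (i) : volume (Θp i) ≠ 0 := fun h => by simpa [h] using hμpos i
  have hμfin (i) : volume (Θp i) ≠ ⊤ :=
    ((measure_mono (hsub i)).trans_lt measure_Icc_lt_top).ne
  have hd0 (i) : 0 ≤ d i :=
    let ⟨θ, hθ⟩ := nonempty_of_measure_ne_zero (hμ0 i)
    hausdorffDist_nonneg.trans (hH i θ hθ)
  have hxint (i) : IntegrableOn x (Θp i) :=
    Measure.integrableOn_of_bounded (hμfin i) hxm.aestronglyMeasurable (M := R) <|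
      ae_restrict_of_forall_mem (hΘmeas i) fun θ hθ =>
        mem_closedBall_zero_iff.mp (hXbd θ (hsub i hθ) (hxf θ (hsub i hθ)))
  have hclose (i) : ∀ θ ∈ Θp i, x θ ∈ cthickening (d i) (Xi i) := fun θ hθ =>
    have hθ' := hsub i hθ
    mem_cthickening_of_hausdorffDist_le (hxf θ hθ')
      (hausdorffEDist_ne_top_of_nonempty_of_bounded ⟨x θ, hxf θ hθ'⟩ (hXine i)
        (isBounded_closedBall.subset (hXbd θ hθ')) (hXicomp i).isBounded)
      (hH i θ hθ)
  choose v hvX hvd using fun i => (hXicomp i).exists_dist_setAverage_le (hXiconv i) (hd0 i)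
    (hμ0 i) (hμfin i) (hxint i) (ae_restrict_of_forall_mem (hΘmeas i) (hclose i))
  refine ⟨v, hvX, integral_le_of_ae_norm_le ?_⟩
  refine ae_restrict_of_forall_mem measurableSet_Icc fun θ hθ => ?_
  obtain ⟨i, hi⟩ := Set.mem_iUnion.mp (hΘcover ▸ hθ)
  rw [hι i θ hi, ← measureReal_def, ← setAverage_eq, ← dist_eq_norm, norm_pow, Real.norm_eq_abs, abs_dist]
  exact pow_le_pow_left₀ dist_nonneg ((hvd i).trans (hD i)) 2

/-- Lemma `lm:FY` ii: given a feasible profile `x` (measurable selection of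
`θ ↦ 𝒳 θ`), the piecewise-averaged profile `ψ(x)` (equal on each `Θ_i` to the mean
`(1/μ_i) ∫_{Θ_i} x`) is at `L²`-distance at most `max_i d_i` from the set of symmetric
profiles, where `d_i ≥ sup_{θ∈Θ_i} d_H(𝒳 θ, X_i)`. -/
theorem averaged_profile_close_to_symmetric {T I : ℕ} {R : ℝ}
    (𝒳 : ℝ → Set (EuclideanSpace ℝ (Fin T)))
    (Θp : Fin I → Set ℝ) (ι : ℝ → Fin I)
    (Xi : Fin I → Set (EuclideanSpace ℝ (Fin T)))
    (d : Fin I → ℝ) (D : ℝ)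
    (hΘmeas : ∀ i, MeasurableSet (Θp i))
    (hΘdisj : ∀ i j, i ≠ j → Disjoint (Θp i) (Θp j))
    (hΘcover : (⋃ i, Θp i) = Set.Icc (0:ℝ) 1)
    (hμpos : ∀ i, 0 < (volume (Θp i)).toReal)
    (hι : ∀ i, ∀ θ ∈ Θp i, ι θ = i) (hιmeas : Measurable ι)
    (hXne : ∀ θ ∈ Set.Icc (0:ℝ) 1, (𝒳 θ).Nonempty)
    (hXconv : ∀ θ ∈ Set.Icc (0:ℝ) 1, Convex ℝ (𝒳 θ))
    (hXcomp : ∀ θ ∈ Set.Icc (0:ℝ) 1, IsCompact (𝒳 θ))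
    (hXbd : ∀ θ ∈ Set.Icc (0:ℝ) 1, 𝒳 θ ⊆ Metric.closedBall 0 R)
    (hXine : ∀ i, (Xi i).Nonempty) (hXiconv : ∀ i, Convex ℝ (Xi i))
    (hXicomp : ∀ i, IsCompact (Xi i))
    (hH : ∀ i, ∀ θ ∈ Θp i, Metric.hausdorffDist (𝒳 θ) (Xi i) ≤ d i)
    (hD : ∀ i, d i ≤ D)
    (x : ℝ → EuclideanSpace ℝ (Fin T)) (hxm : Measurable x)
    (hxf : ∀ θ ∈ Set.Icc (0:ℝ) 1, x θ ∈ 𝒳 θ) :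
    ∃ v : Fin I → EuclideanSpace ℝ (Fin T), (∀ i, v i ∈ Xi i) ∧
      (∫ θ, ‖((volume (Θp (ι θ))).toReal)⁻¹ • (∫ ξ in Θp (ι θ), x ξ) - v (ι θ)‖ ^ 2 ∂μ01)
        ≤ D ^ 2 :=
  averaged_profile_close_to_symmetric_general 𝒳 Θp ι Xi d D hΘmeas hΘcover hμpos hι hXbd hXine
    hXiconv hXicomp hH hD x hxm hxf
end

section
/- With the same partition and sets, the Hausdorff distance between the set of aggregates S = {∫ x_θ dθ : x feasible for (X_θ)_θ} and S' = {Σ_i μ_i x_i : x_i ∈ X_i} is at most max_i d_i. -/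
/-!
Both bounds are proved on each piece `Θ i` of the partition, comparing `∫_{Θ i} x` with
`μ_i • w_i`, and then summed using `∑ μ_i = 1`.

For a feasible `x`, the mean of `x` over `Θ i` lies in the closed convex set
`cthickening (d i) (X i)`, so it is within `d i` of some `w_i ∈ X i`.

Conversely, given `w_i ∈ X i`, one needs a measurable selection of
`θ ↦ X_θ ∩ closedBall w_i (d i)` on `Θ i`. The distance from a fixed point to these sets has
sublevel sets that are projections of Borel sets, hence analytic, hence Lebesgue measurable by
capacitability on Baire space `ℕ → ℕ`. Off a null set the Kuratowski–Ryll-Nardzewski construction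
then gives a measurable selection, and on the null set it is replaced by any feasible selection.
-/

open Metric MeasureTheory

open Set Filter Topology Function
open scoped ENNReal

theorem Metric.exists_dist_le_of_hausdorffDist_le {E : Type*} [PseudoMetricSpace E] {s t : Set E}
    (hs : Bornology.IsBounded s) (ht : IsCompact t) (hsne : s.Nonempty) (htne : t.Nonempty) {x : E}
    (hx : x ∈ s) {δ : ℝ} (h : hausdorffDist s t ≤ δ) : ∃ y ∈ t, dist x y ≤ δ := by
  obtain ⟨y, hy, hxy⟩ := ht.exists_infDist_eq_dist htne x
  refine ⟨y, hy, hxy ▸ (infDist_le_hausdorffDist_of_mem hx ?_).trans h⟩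
  exact hausdorffEDist_ne_top_of_nonempty_of_bounded hsne htne hs ht.isBounded

namespace MeasureTheory

section Capacitability

variable {α : Type*} [MeasurableSpace α] {μ : Measure α}

theorem exists_measure_image_le_inter_add (f : (ℕ → ℕ) → α) (C : Set (ℕ → ℕ)) (n : ℕ)
    (hC : μ (f '' C) ≠ ∞) {ε : ℝ≥0∞} (hε : ε ≠ 0) :
    ∃ N, μ (f '' C) ≤ μ (f '' (C ∩ {x | x n ≤ N})) + ε := by
  have hmono : Monotone fun N : ℕ => f '' (C ∩ {x | x n ≤ N}) := fun N M hNM =>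
    image_mono (inter_subset_inter_right _ fun x hx => le_trans hx hNM)
  have hiSup : μ (f '' C) = ⨆ N : ℕ, μ (f '' (C ∩ {x | x n ≤ N})) := by
    rw [← hmono.measure_iUnion, ← image_iUnion, ← inter_iUnion,
      iUnion_eq_univ_iff.2 fun x => ⟨x n, (le_rfl : x n ≤ x n)⟩, inter_univ]
  by_contra! h
  have : μ (f '' C) + ε ≤ μ (f '' C) := by
    rw [hiSup, ENNReal.iSup_add]
    exact iSup_le fun N => (h N).le.trans (le_of_eq hiSup)
  exact (ENNReal.lt_add_right hC hε).not_ge this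

theorem exists_forall_lt_le_subset_of_isOpen (σ : ℕ → ℕ) {V : Set (ℕ → ℕ)} (hV : IsOpen V)
    (hσV : Set.pi univ (fun i => Iic (σ i)) ⊆ V) : ∃ n, {x | ∀ i < n, x i ≤ σ i} ⊆ V := by
  by_contra! h
  choose x hxσ hxV using fun n => not_subset.1 (h n)
  set P := Set.pi univ fun i => Iic (σ i)
  have hPc : IsCompact P := isCompact_univ_pi fun i => (finite_Iic _).isCompact
  -- clipping `x n` into `P` does not change its first `n` coordinates
  have hclip : ∀ n, (fun i => min (x n i) (σ i)) ∈ P := fun n i _ => mem_Iic.2 (min_le_right _ _)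
  obtain ⟨z, hzP, φ, hφ, hlim⟩ := hPc.tendsto_subseq hclip
  have hxz : Tendsto (fun j => x (φ j)) atTop (𝓝 z) := by
    refine tendsto_pi_nhds.2 fun i => ((tendsto_pi_nhds.1 hlim) i).congr' ?_
    filter_upwards [eventually_gt_atTop i] with j hj
    exact min_eq_left (hxσ (φ j) i (hj.trans_le hφ.le_apply))
  obtain ⟨j, hj⟩ := (hxz.eventually (hV.mem_nhds (hσV hzP))).exists
  exact hxV _ hj

variable [TopologicalSpace α]

theorem exists_isCompact_subset_range_measure_le_add [μ.OuterRegular] {f : (ℕ → ℕ) → α}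
    (hf : Continuous f) (hfin : μ (range f) ≠ ∞) {ε : ℝ≥0∞} (hε : ε ≠ 0) :
    ∃ K, IsCompact K ∧ K ⊆ range f ∧ μ (range f) ≤ μ K + ε := by
  obtain ⟨δ, hδpos, hδsum⟩ := ENNReal.exists_pos_sum_of_countable' hε ℕ
  have hfin' : ∀ C, μ (f '' C) ≠ ∞ := fun C =>
    ne_top_of_le_ne_top hfin (measure_mono (image_subset_range f C))
  choose N hN using fun n C => exists_measure_image_le_inter_add (μ := μ) f C n (hfin' C)
    (hδpos n).ne'
  -- bound the `n`-th coordinate greedily, losing at most `δ n` of the measure of the image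
  let A : ℕ → Set (ℕ → ℕ) := fun n => Nat.rec univ (fun m C => C ∩ {x | x m ≤ N m C}) n
  let σ : ℕ → ℕ := fun n => N n (A n)
  have hA : ∀ n, A n = {x | ∀ i < n, x i ≤ σ i} := by
    intro n
    induction n with
    | zero => simp [A]
    | succ n ih =>
      change A n ∩ {x | x n ≤ σ n} = _
      rw [ih]
      ext x
      simp only [mem_inter_iff, mem_ofPred_eq, Nat.forall_lt_succ_right]
  have hAμ : ∀ n, μ (range f) ≤ μ (f '' A n) + ∑ i ∈ Finset.range n, δ i := by
    intro n
    induction n with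
    | zero => simp [A]
    | succ n ih =>
      calc μ (range f) ≤ μ (f '' A n) + ∑ i ∈ Finset.range n, δ i := ih
        _ ≤ μ (f '' A (n + 1)) + δ n + ∑ i ∈ Finset.range n, δ i := by gcongr; exact hN n (A n)
        _ = μ (f '' A (n + 1)) + ∑ i ∈ Finset.range (n + 1), δ i := by
          rw [Finset.sum_range_succ, add_assoc, add_comm (δ n)]
  set K := f '' Set.pi univ fun i => Iic (σ i)
  refine ⟨K, (isCompact_univ_pi fun i => (finite_Iic _).isCompact).image hf,
    image_subset_range _ _, ENNReal.le_of_forall_pos_le_add fun η hη _ => ?_⟩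
  obtain ⟨U, hKU, hU, hμU⟩ := K.exists_isOpen_lt_add (hfin' _) (ENNReal.coe_ne_zero.2 hη.ne')
  obtain ⟨n, hn⟩ := exists_forall_lt_le_subset_of_isOpen σ (hU.preimage hf)
    (image_subset_iff.1 hKU)
  calc μ (range f) ≤ μ (f '' A n) + ∑ i ∈ Finset.range n, δ i := hAμ n
    _ ≤ μ U + ε := by
      gcongr
      · exact image_subset_iff.2 (hA n ▸ hn)
      · exact (ENNReal.sum_le_tsum _).trans hδsum.le
    _ ≤ μ K + η + ε := by gcongr
    _ = μ K + ε + η := add_right_comm _ _ _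

theorem AnalyticSet.nullMeasurableSet [T2Space α] [OpensMeasurableSpace α] [μ.OuterRegular]
    {s : Set α} (hs : AnalyticSet s) (hμs : μ s ≠ ∞) : NullMeasurableSet s μ := by
  obtain rfl | ⟨f, hf, rfl⟩ := AnalyticSet_def s ▸ hs
  · exact nullMeasurableSet_empty
  choose K hK hKf hμK using fun m : ℕ => exists_isCompact_subset_range_measure_le_add (μ := μ) hf
    hμs (ENNReal.inv_ne_zero.2 (ENNReal.natCast_ne_top m))
  have hB : MeasurableSet (⋃ m, K m) := .iUnion fun m => (hK m).measurableSet
  have hμB : μ (range f) ≤ μ (⋃ m, K m) := by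
    refine ENNReal.le_of_forall_pos_le_add fun η hη _ => ?_
    obtain ⟨m, hm⟩ := ENNReal.exists_inv_nat_lt (ENNReal.coe_ne_zero.2 hη.ne')
    calc μ (range f) ≤ μ (K m) + (m : ℝ≥0∞)⁻¹ := hμK m
      _ ≤ μ (⋃ m, K m) + η := add_le_add (measure_mono (subset_iUnion K m)) hm.le
  exact hB.nullMeasurableSet.congr
    (ae_eq_of_subset_of_measure_ge (iUnion_subset hKf) hμB hB.nullMeasurableSet hμs)

end Capacitability

section Selection

variable {α E : Type*} [MeasurableSpace α] [MetricSpace E] [MeasurableSpace E] {q : ℕ → E}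
  {Γ : α → Set E}

theorem exists_measurable_infDist_lt (hq : DenseRange q) (hne : ∀ θ, (Γ θ).Nonempty)
    (hΓ : ∀ k, Measurable fun θ => infDist (q k) (Γ θ)) {s : ℝ} (hs : 0 < s) :
    ∃ f : α → E, Measurable f ∧ ∀ θ, infDist (f θ) (Γ θ) < s := by
  have hex : ∀ θ, ∃ k, infDist (q k) (Γ θ) < s := fun θ => by
    obtain ⟨y, hy⟩ := hne θ
    obtain ⟨k, hk⟩ := hq.exists_dist_lt y hs
    exact ⟨k, (infDist_le_dist_of_mem hy).trans_lt (dist_comm y (q k) ▸ hk)⟩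
  exact ⟨fun θ => q (Nat.find (hex θ)),
    measurable_from_nat.comp
      (measurable_find hex fun k => measurableSet_lt (hΓ k) measurable_const),
    fun θ => Nat.find_spec (hex θ)⟩

variable [BorelSpace E]

theorem exists_measurable_infDist_lt_dist_lt (hq : DenseRange q) (hne : ∀ θ, (Γ θ).Nonempty)
    (hΓ : ∀ k, Measurable fun θ => infDist (q k) (Γ θ)) {f : α → E} (hf : Measurable f) {r s : ℝ}
    (hs : 0 < s) (hfr : ∀ θ, infDist (f θ) (Γ θ) < r) :
    ∃ f' : α → E, Measurable f' ∧ ∀ θ, infDist (f' θ) (Γ θ) < s ∧ dist (f' θ) (f θ) < r + s := by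
  have hex : ∀ θ, ∃ k, infDist (q k) (Γ θ) < s ∧ dist (q k) (f θ) < r + s := fun θ => by
    obtain ⟨y, hy, hfy⟩ := (infDist_lt_iff (hne θ)).1 (hfr θ)
    obtain ⟨k, hk⟩ := hq.exists_dist_lt y hs
    refine ⟨k, (infDist_le_dist_of_mem hy).trans_lt (dist_comm y (q k) ▸ hk), ?_⟩
    calc dist (q k) (f θ) ≤ dist y (q k) + dist (f θ) y := by
          rw [dist_comm y, dist_comm (f θ)]; exact dist_triangle _ _ _
      _ < r + s := by linarith
  exact ⟨fun θ => q (Nat.find (hex θ)),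
    measurable_from_nat.comp (measurable_find hex fun k =>
      (measurableSet_lt (hΓ k) measurable_const).inter
        (measurableSet_lt ((continuous_const.dist continuous_id).measurable.comp hf)
          measurable_const)),
    fun θ => Nat.find_spec (hex θ)⟩

/-- **Kuratowski–Ryll-Nardzewski selection theorem**. -/
theorem exists_measurable_forall_mem [CompleteSpace E] (hq : DenseRange q)
    (hcl : ∀ θ, IsClosed (Γ θ)) (hne : ∀ θ, (Γ θ).Nonempty)
    (hΓ : ∀ k, Measurable fun θ => infDist (q k) (Γ θ)) :
    ∃ g : α → E, Measurable g ∧ ∀ θ, g θ ∈ Γ θ := by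
  obtain ⟨f₀, hf₀, hf₀Γ⟩ := exists_measurable_infDist_lt hq hne hΓ one_pos
  choose! F hF hFΓ using fun (n : ℕ) (f : α → E) (hf : Measurable f)
    (hfΓ : ∀ θ, infDist (f θ) (Γ θ) < (1 / 2) ^ n) =>
    exists_measurable_infDist_lt_dist_lt hq hne hΓ hf
      (by positivity : (0 : ℝ) < (1 / 2) ^ (n + 1)) hfΓ
  let f : ℕ → α → E := fun n => Nat.rec f₀ F n
  have hf : ∀ n, Measurable (f n) ∧ ∀ θ, infDist (f n θ) (Γ θ) < (1 / 2) ^ n := by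
    intro n
    induction n with
    | zero => exact ⟨hf₀, fun θ => (hf₀Γ θ).trans_eq (pow_zero _).symm⟩
    | succ n ih => exact ⟨hF n _ ih.1 ih.2, fun θ => (hFΓ n _ ih.1 ih.2 θ).1⟩
  have hcauchy : ∀ θ, CauchySeq fun n => f n θ := fun θ =>
    cauchySeq_of_le_geometric (1 / 2) 2 (by norm_num) fun n => by
      rw [dist_comm]
      have := (hFΓ n _ (hf n).1 (hf n).2 θ).2
      rw [pow_succ] at this
      change dist (F n (f n) θ) (f n θ) ≤ 2 * (1 / 2) ^ n
      linarith [pow_nonneg (by norm_num : (0 : ℝ) ≤ 1 / 2) n]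
  choose g hg using fun θ => cauchySeq_tendsto_of_complete (hcauchy θ)
  refine ⟨g, measurable_of_tendsto_metrizable (fun n => (hf n).1) (tendsto_pi_nhds.2 hg),
    fun θ => ?_⟩
  have hlim : Tendsto (fun n => infDist (f n θ) (Γ θ)) atTop (𝓝 0) :=
    squeeze_zero (fun n => infDist_nonneg) (fun n => ((hf n).2 θ).le)
      (tendsto_pow_atTop_nhds_zero_of_lt_one (by norm_num) (by norm_num))
  rw [(hcl θ).mem_iff_infDist_zero (hne θ)]
  exact tendsto_nhds_unique ((continuous_infDist_pt _).continuousAt.tendsto.comp (hg θ)) hlim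

variable [TopologicalSpace α] [PolishSpace α] [BorelSpace α] [CompleteSpace E]
  [SecondCountableTopology E]

theorem aemeasurable_infDist_setOf_mem (μ : Measure α) [IsFiniteMeasure μ] {G : Set (α × E)}
    (hG : MeasurableSet G) (hne : ∀ θ, ∃ y, (θ, y) ∈ G) (x : E) :
    AEMeasurable (fun θ => infDist x {y | (θ, y) ∈ G}) μ := by
  refine NullMeasurable.aemeasurable (measurable_of_Iio fun r => (?_ : NullMeasurableSet _ μ))
  -- a sublevel set is the projection of a Borel set, hence analytic
  have : (fun θ => infDist x {y | (θ, y) ∈ G}) ⁻¹' Iio r =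
      Prod.fst '' (G ∩ univ ×ˢ ball x r) := by
    ext θ
    rw [mem_preimage, mem_Iio, infDist_lt_iff (s := {y | (θ, y) ∈ G}) (hne θ)]
    simp [dist_comm]
  exact this ▸ ((hG.inter (MeasurableSet.univ.prod measurableSet_ball)).analyticSet_image
    measurable_fst).nullMeasurableSet (measure_ne_top μ _)

variable [Nonempty E]

theorem exists_measurable_ae_mem (μ : Measure α) [IsFiniteMeasure μ] {G : Set (α × E)}
    (hG : MeasurableSet G) (hcl : ∀ θ, IsClosed {y | (θ, y) ∈ G})
    (hne : ∀ θ, ∃ y, (θ, y) ∈ G) :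
    ∃ g : α → E, Measurable g ∧ ∀ᵐ θ ∂μ, (θ, g θ) ∈ G := by
  classical
  set Γ : α → Set E := fun θ => {y | (θ, y) ∈ G}
  set q := TopologicalSpace.denseSeq E
  have hΓ : ∀ k, AEMeasurable (fun θ => infDist (q k) (Γ θ)) μ :=
    fun k => aemeasurable_infDist_setOf_mem μ hG hne (q k)
  set Z := toMeasurable μ {θ | ¬∀ k, infDist (q k) (Γ θ) = (hΓ k).mk _ θ}
  have hZ : ∀ᵐ θ ∂μ, θ ∉ Z := by
    refine measure_eq_zero_iff_ae_notMem.1 ?_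
    rw [measure_toMeasurable]
    exact ae_iff.1 (ae_all_iff.2 fun k => (hΓ k).ae_eq_mk)
  -- on `Z` the correspondence is replaced by `univ`, which makes the distance functions measurable
  obtain ⟨g, hg, hgΓ⟩ := exists_measurable_forall_mem (Γ := fun θ => if θ ∈ Z then univ else Γ θ)
    (TopologicalSpace.denseRange_denseSeq E) (fun θ => by split_ifs; exacts [isClosed_univ, hcl θ])
    (fun θ => by split_ifs; exacts [univ_nonempty, hne θ]) fun k => by
      have : (fun θ => infDist (q k) (if θ ∈ Z then univ else Γ θ)) =
          Z.piecewise (fun _ => 0) ((hΓ k).mk _) := funext fun θ => by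
        by_cases hθ : θ ∈ Z
        · simp [hθ, infDist_zero_of_mem (mem_univ (q k))]
        · have : ∀ k, infDist (q k) (Γ θ) = (hΓ k).mk _ θ := by
            by_contra h
            exact hθ (subset_toMeasurable μ _ h)
          simp [hθ, this k]
      rw [this]
      exact Measurable.piecewise (measurableSet_toMeasurable μ _) measurable_const
        (hΓ k).measurable_mk
  exact ⟨g, hg, hZ.mono fun θ hθ => by simpa [hθ, Γ] using hgΓ θ⟩

theorem exists_measurable_forall_mem_ae_mem (μ : Measure α) [IsFiniteMeasure μ]
    {F G : Set (α × E)} (hG : MeasurableSet G) (hGF : G ⊆ F)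
    (hcl : ∀ θ, IsClosed {y | (θ, y) ∈ G}) (hne : ∀ θ, ∃ y, (θ, y) ∈ G) {x₀ : α → E}
    (hx₀ : Measurable x₀) (hx₀F : ∀ θ, (θ, x₀ θ) ∈ F) :
    ∃ x : α → E, Measurable x ∧ (∀ θ, (θ, x θ) ∈ F) ∧ ∀ᵐ θ ∂μ, (θ, x θ) ∈ G := by
  classical
  obtain ⟨g, hg, hgG⟩ := exists_measurable_ae_mem μ hG hcl hne
  set A := {θ | (θ, g θ) ∈ G}
  have hA : MeasurableSet A := (measurable_id.prodMk hg) hG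
  refine ⟨A.piecewise g x₀, hg.piecewise hA hx₀, fun θ => ?_, ?_⟩
  · by_cases hθ : θ ∈ A
    · simpa [hθ] using hGF hθ
    · simpa [hθ] using hx₀F θ
  · filter_upwards [hgG] with θ hθ
    simpa [show θ ∈ A from hθ] using hθ

theorem exists_measurable_forall_mem_ae_dist_le {ι : Type*} [Finite ι] (μ : Measure α)
    [IsFiniteMeasure μ] {s : Set α} (hs : MeasurableSet s) {Γ : α → Set E}
    (hΓ : MeasurableSet {p : α × E | p.1 ∈ s ∧ p.2 ∈ Γ p.1}) (hcl : ∀ θ ∈ s, IsClosed (Γ θ))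
    {Θ : ι → Set α} (hΘ : ∀ i, MeasurableSet (Θ i)) (hdisj : Pairwise (Disjoint on Θ))
    {w : ι → E} {d : ι → ℝ} (hwd : ∀ i, ∀ θ ∈ Θ i, ∃ y ∈ Γ θ, dist (w i) y ≤ d i)
    {x₀ : α → E} (hx₀ : Measurable x₀) (hx₀Γ : ∀ θ ∈ s, x₀ θ ∈ Γ θ) :
    ∃ x : α → E, Measurable x ∧ (∀ θ ∈ s, x θ ∈ Γ θ) ∧
      ∀ᵐ θ ∂μ, ∀ i, θ ∈ Θ i → dist (x θ) (w i) ≤ d i := by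
  set F := {p : α × E | p.1 ∈ s → p.2 ∈ Γ p.1}
  set G := F ∩ {p : α × E | ∀ i, p.1 ∈ Θ i → dist p.2 (w i) ≤ d i}
  have hF : MeasurableSet F := by
    convert (hs.preimage measurable_fst).compl.union hΓ using 1
    ext p
    by_cases hp : p.1 ∈ s <;> simp [F, hp]
  have hG : MeasurableSet G := hF.inter <| Measurable.setOf <| Measurable.forall fun i =>
    ((hΘ i).mem.comp measurable_fst).imp
      (measurableSet_le (continuous_snd.dist continuous_const).measurable measurable_const).mem
  have hGcl : ∀ θ, IsClosed {y | (θ, y) ∈ G} := fun θ => by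
    have : {y | (θ, y) ∈ G} =
        {y | θ ∈ s → y ∈ Γ θ} ∩ ⋂ i, {y | θ ∈ Θ i → dist y (w i) ≤ d i} := by
      ext y
      simp [G, F]
    rw [this]
    refine IsClosed.inter ?_ <| isClosed_iInter fun i => isClosed_imp isOpen_const <|
      isClosed_le (continuous_id.dist continuous_const) continuous_const
    by_cases hθ : θ ∈ s
    · simpa [hθ] using hcl θ hθ
    · simp [hθ]
  -- a point `θ` lies in at most one `Θ i`, and if in none the constraint is void
  have hGne : ∀ θ, ∃ y, (θ, y) ∈ G := fun θ => by
    by_cases hθ : ∃ i, θ ∈ Θ i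
    · obtain ⟨i, hi⟩ := hθ
      obtain ⟨y, hyΓ, hyw⟩ := hwd i θ hi
      refine ⟨y, fun _ => hyΓ, fun j hj => ?_⟩
      obtain rfl : j = i := hdisj.eq (not_disjoint_iff.2 ⟨θ, hj, hi⟩)
      exact (dist_comm _ _).trans_le hyw
    · exact ⟨x₀ θ, hx₀Γ θ, fun i hi => (hθ ⟨i, hi⟩).elim⟩
  obtain ⟨x, hx, hxF, hxG⟩ :=
    exists_measurable_forall_mem_ae_mem μ hG inter_subset_left hGcl hGne hx₀ hx₀Γ
  exact ⟨x, hx, hxF, hxG.mono fun θ hθ => hθ.2⟩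

end Selection

section Aggregate

variable {α E : Type*} [MeasurableSpace α] {μ : Measure α} [NormedAddCommGroup E]
  [NormedSpace ℝ E]

theorem dist_setIntegral_sum_smul_le {ι : Type*} [Fintype ι] {s : Set α} {Θ : ι → Set α}
    (hΘ : ∀ i, MeasurableSet (Θ i)) (hdisj : Pairwise (Disjoint on Θ)) (hcover : ⋃ i, Θ i = s)
    (hμs : μ s ≠ ∞) {x : α → E} (hx : IntegrableOn x s μ) {w : ι → E} {d : ι → ℝ} {D : ℝ}
    (h : ∀ i, ‖∫ θ in Θ i, x θ ∂μ - μ.real (Θ i) • w i‖ ≤ μ.real (Θ i) * d i)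
    (hD : ∀ i, d i ≤ D) :
    dist (∫ θ in s, x θ ∂μ) (∑ i, μ.real (Θ i) • w i) ≤ μ.real s * D := by
  subst hcover
  rw [dist_eq_norm, integral_iUnion_fintype hΘ hdisj fun i => hx.mono_set (subset_iUnion Θ i),
    ← Finset.sum_sub_distrib, measureReal_iUnion_fintype hdisj hΘ
      fun i => ne_top_of_le_ne_top hμs (measure_mono (subset_iUnion Θ i)), Finset.sum_mul]
  calc _ ≤ ∑ i, ‖∫ θ in Θ i, x θ ∂μ - μ.real (Θ i) • w i‖ := norm_sum_le _ _
    _ ≤ ∑ i, μ.real (Θ i) * D := Finset.sum_le_sum fun i _ =>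
      (h i).trans (mul_le_mul_of_nonneg_left (hD i) measureReal_nonneg)

variable [CompleteSpace E]

theorem norm_setIntegral_sub_smul_le {s : Set α} (hs : μ s ≠ ∞) {x : α → E}
    (hx : IntegrableOn x s μ) {w : E} {δ : ℝ} (h : ∀ᵐ θ ∂μ.restrict s, dist (x θ) w ≤ δ) :
    ‖∫ θ in s, x θ ∂μ - μ.real s • w‖ ≤ μ.real s * δ := by
  rw [← setIntegral_const, ← integral_sub hx (integrableOn_const hs), mul_comm]
  exact norm_setIntegral_le_of_norm_le_const_ae hs.lt_top (by simpa [dist_eq_norm] using h)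

theorem exists_mem_norm_setIntegral_sub_smul_le {s : Set α} (hs : MeasurableSet s)
    (hμs : μ s ≠ ∞) {X : Set E} (hXconv : Convex ℝ X) (hXcomp : IsCompact X) (hXne : X.Nonempty)
    {x : α → E} (hx : IntegrableOn x s μ) {δ : ℝ} (hxX : ∀ θ ∈ s, ∃ y ∈ X, dist (x θ) y ≤ δ) :
    ∃ w ∈ X, ‖∫ θ in s, x θ ∂μ - μ.real s • w‖ ≤ μ.real s * δ := by
  rcases eq_or_ne (μ s) 0 with h0 | h0
  · exact ⟨hXne.some, hXne.some_mem, by simp [setIntegral_measure_zero _ h0, measureReal_def, h0]⟩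
  obtain ⟨θ, hθ⟩ := nonempty_of_measure_ne_zero h0
  have hδ : 0 ≤ δ := by
    obtain ⟨y, -, hy⟩ := hxX θ hθ
    exact dist_nonneg.trans hy
  have havg : ⨍ θ in s, x θ ∂μ ∈ cthickening δ X :=
    (hXconv.cthickening δ).set_average_mem isClosed_cthickening h0 hμs
      ((ae_restrict_iff' hs).2 (Eventually.of_forall fun θ hθ => by
        obtain ⟨y, hy, hxy⟩ := hxX θ hθ
        exact mem_cthickening_of_dist_le _ y δ X hy hxy)) hx
  rw [hXcomp.cthickening_eq_biUnion_closedBall hδ, mem_iUnion₂] at havg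
  obtain ⟨w, hw, hdist⟩ := havg
  have hreal : μ.real s ≠ 0 := ENNReal.toReal_ne_zero.2 ⟨h0, hμs⟩
  refine ⟨w, hw, ?_⟩
  rw [← smul_inv_smul₀ hreal (∫ θ in s, x θ ∂μ), ← setAverage_eq, ← smul_sub, norm_smul,
    Real.norm_of_nonneg measureReal_nonneg, ← dist_eq_norm]
  exact mul_le_mul_of_nonneg_left (mem_closedBall.1 hdist) measureReal_nonneg

theorem dist_setIntegral_sum_smul_le_of_ae_dist_le {ι : Type*} [Fintype ι] {s : Set α}
    {Θ : ι → Set α} (hΘ : ∀ i, MeasurableSet (Θ i)) (hdisj : Pairwise (Disjoint on Θ))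
    (hcover : ⋃ i, Θ i = s) (hμs : μ s ≠ ∞) {x : α → E} (hx : IntegrableOn x s μ) {w : ι → E}
    {d : ι → ℝ} {D : ℝ} (hxw : ∀ᵐ θ ∂μ.restrict s, ∀ i, θ ∈ Θ i → dist (x θ) (w i) ≤ d i)
    (hD : ∀ i, d i ≤ D) :
    dist (∫ θ in s, x θ ∂μ) (∑ i, μ.real (Θ i) • w i) ≤ μ.real s * D := by
  have hsub : ∀ i, Θ i ⊆ s := fun i => hcover ▸ subset_iUnion Θ i
  refine dist_setIntegral_sum_smul_le hΘ hdisj hcover hμs hx (fun i => ?_) hD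
  refine norm_setIntegral_sub_smul_le (measure_ne_top_of_subset (hsub i) hμs)
    (hx.mono_set (hsub i)) ?_
  filter_upwards [ae_restrict_of_ae_restrict_of_subset (hsub i) hxw, ae_restrict_mem (hΘ i)]
    with θ hθ hθi using hθ i hθi

theorem exists_dist_setIntegral_sum_smul_le {ι : Type*} [Fintype ι] {s : Set α}
    {Θ : ι → Set α} (hΘ : ∀ i, MeasurableSet (Θ i)) (hdisj : Pairwise (Disjoint on Θ))
    (hcover : ⋃ i, Θ i = s) (hμs : μ s ≠ ∞) {X : ι → Set E} (hXconv : ∀ i, Convex ℝ (X i))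
    (hXcomp : ∀ i, IsCompact (X i)) (hXne : ∀ i, (X i).Nonempty) {x : α → E}
    (hx : IntegrableOn x s μ) {d : ι → ℝ} {D : ℝ}
    (hxX : ∀ i, ∀ θ ∈ Θ i, ∃ y ∈ X i, dist (x θ) y ≤ d i) (hD : ∀ i, d i ≤ D) :
    ∃ w : ι → E, (∀ i, w i ∈ X i) ∧
      dist (∫ θ in s, x θ ∂μ) (∑ i, μ.real (Θ i) • w i) ≤ μ.real s * D := by
  have hsub : ∀ i, Θ i ⊆ s := fun i => hcover ▸ subset_iUnion Θ i
  choose w hw hxw using fun i => exists_mem_norm_setIntegral_sub_smul_le (hΘ i)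
    (measure_ne_top_of_subset (hsub i) hμs) (hXconv i) (hXcomp i) (hXne i) (hx.mono_set (hsub i))
    (hxX i)
  exact ⟨w, hw, dist_setIntegral_sum_smul_le hΘ hdisj hcover hμs hx hxw hD⟩

end Aggregate

end MeasureTheory

theorem hausdorffDist_aggregate_sets_le_general {T I : ℕ} {R : ℝ}
    (𝒳 : ℝ → Set (EuclideanSpace ℝ (Fin T)))
    (Θp : Fin I → Set ℝ)
    (Xi : Fin I → Set (EuclideanSpace ℝ (Fin T)))
    (d : Fin I → ℝ) (D : ℝ)
    (hΘmeas : ∀ i, MeasurableSet (Θp i))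
    (hΘdisj : ∀ i j, i ≠ j → Disjoint (Θp i) (Θp j))
    (hΘcover : (⋃ i, Θp i) = Set.Icc (0:ℝ) 1)
    (hgraph : MeasurableSet
      {p : ℝ × EuclideanSpace ℝ (Fin T) | p.1 ∈ Set.Icc (0:ℝ) 1 ∧ p.2 ∈ 𝒳 p.1})
    (hXne : ∀ θ ∈ Set.Icc (0:ℝ) 1, (𝒳 θ).Nonempty)
    (hXcomp : ∀ θ ∈ Set.Icc (0:ℝ) 1, IsCompact (𝒳 θ))
    (hXbd : ∀ θ ∈ Set.Icc (0:ℝ) 1, 𝒳 θ ⊆ Metric.closedBall 0 R)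
    (hXine : ∀ i, (Xi i).Nonempty) (hXiconv : ∀ i, Convex ℝ (Xi i))
    (hXicomp : ∀ i, IsCompact (Xi i))
    (hH : ∀ i, ∀ θ ∈ Θp i, Metric.hausdorffDist (𝒳 θ) (Xi i) ≤ d i)
    (hD : ∀ i, d i ≤ D) :
    Metric.hausdorffDist
      {z : EuclideanSpace ℝ (Fin T) | ∃ x : ℝ → EuclideanSpace ℝ (Fin T),
        Measurable x ∧ (∀ θ ∈ Set.Icc (0:ℝ) 1, x θ ∈ 𝒳 θ) ∧ (∫ θ, x θ ∂μ01) = z}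
      {z : EuclideanSpace ℝ (Fin T) | ∃ w : Fin I → EuclideanSpace ℝ (Fin T),
        (∀ i, w i ∈ Xi i) ∧ (∑ i, (volume (Θp i)).toReal • w i) = z} ≤ D := by
  have hsub : ∀ i, Θp i ⊆ Icc 0 1 := fun i => hΘcover ▸ subset_iUnion Θp i
  have hD0 : 0 ≤ D := by
    obtain ⟨i, hi⟩ := mem_iUnion.1 (hΘcover ▸ left_mem_Icc.2 zero_le_one : (0 : ℝ) ∈ ⋃ i, Θp i)
    exact (hausdorffDist_nonneg.trans (hH i 0 hi)).trans (hD i)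
  have hint : ∀ x : ℝ → EuclideanSpace ℝ (Fin T), Measurable x →
      (∀ θ ∈ Icc (0 : ℝ) 1, x θ ∈ 𝒳 θ) → IntegrableOn x (Icc 0 1) :=
    fun x hx hx𝒳 => Integrable.of_bound hx.aestronglyMeasurable R <|
      (ae_restrict_iff' measurableSet_Icc).2 <| Eventually.of_forall fun θ hθ => by
        simpa using hXbd θ hθ (hx𝒳 θ hθ)
  refine hausdorffDist_le_of_infDist hD0 ?_ ?_
  · rintro _ ⟨x, hx, hx𝒳, rfl⟩
    obtain ⟨w, hw, hxw⟩ := exists_dist_setIntegral_sum_smul_le hΘmeas (fun i j => hΘdisj i j)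
      hΘcover (by simp) hXiconv hXicomp hXine (hint x hx hx𝒳) (fun i θ hθ =>
        exists_dist_le_of_hausdorffDist_le (hXcomp θ (hsub i hθ)).isBounded (hXicomp i)
          (hXne θ (hsub i hθ)) (hXine i) (hx𝒳 θ (hsub i hθ)) (hH i θ hθ)) hD
    exact (infDist_le_dist_of_mem (by exact ⟨w, hw, rfl⟩)).trans (hxw.trans_eq (by simp))
  · rintro _ ⟨w, hw, rfl⟩
    -- without any feasible selection the set of aggregates is empty, and `infDist` to it is `0`
    obtain hS | ⟨-, x₀, hx₀, hx₀𝒳, -⟩ := eq_empty_or_nonempty {z : EuclideanSpace ℝ (Fin T) |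
      ∃ x : ℝ → EuclideanSpace ℝ (Fin T),
        Measurable x ∧ (∀ θ ∈ Set.Icc (0:ℝ) 1, x θ ∈ 𝒳 θ) ∧ (∫ θ, x θ ∂μ01) = z}
    · exact hS ▸ infDist_empty.trans_le hD0
    obtain ⟨x, hx, hx𝒳, hxw⟩ := exists_measurable_forall_mem_ae_dist_le
      (volume.restrict (Icc 0 1)) measurableSet_Icc hgraph (fun θ hθ => (hXcomp θ hθ).isClosed)
      hΘmeas (fun i j => hΘdisj i j) (fun i θ hθ => exists_dist_le_of_hausdorffDist_le
        (hXicomp i).isBounded (hXcomp θ (hsub i hθ)) (hXine i) (hXne θ (hsub i hθ)) (hw i)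
        (hausdorffDist_comm.trans_le (hH i θ hθ))) hx₀ hx₀𝒳
    refine (infDist_le_dist_of_mem (by exact ⟨x, hx, hx𝒳, rfl⟩)).trans ?_
    rw [dist_comm]
    exact (dist_setIntegral_sum_smul_le_of_ae_dist_le hΘmeas (fun i j => hΘdisj i j) hΘcover
      (by simp) (hint x hx hx𝒳) hxw hD).trans_eq (by simp)

/-- Lemma `lem:hausdorff_agg_sets` i: the Hausdorff distance between the set
of aggregates `S = {∫ x_θ dθ : x feasible for (𝒳_θ)}` and the set of finite-type aggregates
`S' = {Σ_i μ_i x_i : x_i ∈ X_i}` is at most `max_i d_i`. -/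
theorem hausdorffDist_aggregate_sets_le {T I : ℕ} {R : ℝ}
    (𝒳 : ℝ → Set (EuclideanSpace ℝ (Fin T)))
    (Θp : Fin I → Set ℝ)
    (Xi : Fin I → Set (EuclideanSpace ℝ (Fin T)))
    (d : Fin I → ℝ) (D : ℝ)
    (hΘmeas : ∀ i, MeasurableSet (Θp i))
    (hΘdisj : ∀ i j, i ≠ j → Disjoint (Θp i) (Θp j))
    (hΘcover : (⋃ i, Θp i) = Set.Icc (0:ℝ) 1)
    (hgraph : MeasurableSet
      {p : ℝ × EuclideanSpace ℝ (Fin T) | p.1 ∈ Set.Icc (0:ℝ) 1 ∧ p.2 ∈ 𝒳 p.1})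
    (hXne : ∀ θ ∈ Set.Icc (0:ℝ) 1, (𝒳 θ).Nonempty)
    (hXconv : ∀ θ ∈ Set.Icc (0:ℝ) 1, Convex ℝ (𝒳 θ))
    (hXcomp : ∀ θ ∈ Set.Icc (0:ℝ) 1, IsCompact (𝒳 θ))
    (hXbd : ∀ θ ∈ Set.Icc (0:ℝ) 1, 𝒳 θ ⊆ Metric.closedBall 0 R)
    (hXine : ∀ i, (Xi i).Nonempty) (hXiconv : ∀ i, Convex ℝ (Xi i))
    (hXicomp : ∀ i, IsCompact (Xi i))
    (hH : ∀ i, ∀ θ ∈ Θp i, Metric.hausdorffDist (𝒳 θ) (Xi i) ≤ d i)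
    (hD : ∀ i, d i ≤ D) :
    Metric.hausdorffDist
      {z : EuclideanSpace ℝ (Fin T) | ∃ x : ℝ → EuclideanSpace ℝ (Fin T),
        Measurable x ∧ (∀ θ ∈ Set.Icc (0:ℝ) 1, x θ ∈ 𝒳 θ) ∧ (∫ θ, x θ ∂μ01) = z}
      {z : EuclideanSpace ℝ (Fin T) | ∃ w : Fin I → EuclideanSpace ℝ (Fin T),
        (∀ i, w i ∈ Xi i) ∧ (∑ i, (volume (Θp i)).toReal • w i) = z} ≤ D :=
  hausdorffDist_aggregate_sets_le_general 𝒳 Θp Xi d D hΘmeas hΘdisj hΘcover hgraph hXne hXcomp hXbd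
    hXine hXiconv hXicomp hH hD
end

section
/- In the smart grid example with I-type approximating games where type i ∈ {1,…,I} has weight 1/I, action set X_i = {(x_O,x_P) ∈ R²₊ : x_O + x_P = (i/I)·N·E_max} and the same linear price cost, the symmetric equilibrium aggregate is X̂^I = (1 + 1/I)·X*, where X* is the aggregate equilibrium of the continuum game; hence ‖X̂^I − X*‖ = ‖X*‖/I = (√(a_O²+a_P²)/(a_O+a_P))·E_tot/I. -/
/-!
Testing the variational inequality at the two endpoints of the segment
`{x ≥ 0, x₀ + x₁ = s}` shows that a solution equalises the marginal prices, `a z₀ = b z₁`;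
conversely every such point solves it, because the VI expression is then `a z₀` times the
change of the (fixed) total. Together with the budget this pins the solution down as
`s • (b, a) / (a + b)`, which is linear in `s`: the total `(1 + 1/I) E_tot` of the approximating
game therefore gives `X̂ = (1 + 1/I) X*`, and `X̂ - X* = X*/I`.
-/

open Real

theorem vi_on_segment_iff_mul_eq_mul {a b s : ℝ} (ha : 0 ≤ a) (hb : 0 ≤ b)
    {z : EuclideanSpace ℝ (Fin 2)} (hz : 0 ≤ z 0 ∧ 0 ≤ z 1 ∧ z 0 + z 1 = s) :
    (∀ x : EuclideanSpace ℝ (Fin 2), (0 ≤ x 0 ∧ 0 ≤ x 1 ∧ x 0 + x 1 = s) →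
        0 ≤ a * z 0 * (x 0 - z 0) + b * z 1 * (x 1 - z 1)) ↔
      a * z 0 = b * z 1 := by
  obtain ⟨hz0, hz1, hsum⟩ := hz
  constructor
  · intro hvi
    have hs : 0 ≤ s := hsum ▸ add_nonneg hz0 hz1
    have at_left := hvi !₂[s, 0] ⟨hs, le_rfl, by simp⟩
    have at_right := hvi !₂[0, s] ⟨le_rfl, hs, by simp⟩
    simp only [Matrix.cons_val_zero, Matrix.cons_val_one] at at_left at_right
    have h1 : 0 ≤ z 1 * (a * z 0 - b * z 1) := by
      linear_combination at_left - a * z 0 * hsum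
    have h0 : 0 ≤ z 0 * (b * z 1 - a * z 0) := by
      linear_combination at_right - b * z 1 * hsum
    rcases lt_trichotomy (a * z 0) (b * z 1) with hlt | heq | hgt
    · have hz1_zero : z 1 = 0 := le_antisymm (nonpos_of_mul_nonneg_left h1 (by linarith)) hz1
      rw [hz1_zero, mul_zero] at hlt
      exact absurd hlt (mul_nonneg ha hz0).not_gt
    · exact heq
    · have hz0_zero : z 0 = 0 := le_antisymm (nonpos_of_mul_nonneg_left h0 (by linarith)) hz0
      rw [hz0_zero, mul_zero] at hgt
      exact absurd hgt (mul_nonneg hb hz1).not_gt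
  · intro hbal x ⟨_, _, hxsum⟩
    have factored :
        a * z 0 * (x 0 - z 0) + b * z 1 * (x 1 - z 1) = a * z 0 * (x 0 + x 1 - s) := by
      linear_combination -(x 1 - z 1) * hbal - a * z 0 * hsum
    rw [factored, hxsum, sub_self, mul_zero]

theorem segment_and_mul_eq_mul_iff {a b s z₀ z₁ : ℝ} (ha : 0 ≤ a) (hb : 0 ≤ b)
    (hab : 0 < a + b) (hs : 0 ≤ s) :
    (0 ≤ z₀ ∧ 0 ≤ z₁ ∧ z₀ + z₁ = s) ∧ a * z₀ = b * z₁ ↔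
      z₀ = b * s / (a + b) ∧ z₁ = a * s / (a + b) := by
  constructor
  · rintro ⟨⟨-, -, hsum⟩, hbal⟩
    rw [eq_div_iff hab.ne', eq_div_iff hab.ne']
    exact ⟨by linear_combination hbal + b * hsum, by linear_combination a * hsum - hbal⟩
  · rintro ⟨rfl, rfl⟩
    refine ⟨⟨by positivity, by positivity, ?_⟩, ?_⟩
    · field_simp
      ring
    · field_simp

theorem sqrt_mul_sq_add_mul_sq (t p q : ℝ) :
    √((t * p) ^ 2 + (t * q) ^ 2) = |t| * √(p ^ 2 + q ^ 2) := by
  rw [show (t * p) ^ 2 + (t * q) ^ 2 = t ^ 2 * (p ^ 2 + q ^ 2) by ring,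
    sqrt_mul (sq_nonneg t), sqrt_sq_eq_abs]

theorem smart_grid_finite_approximation_general {N Emax aO aP : ℝ} {I : ℕ}
    (hN : 0 < N) (hE : 0 < Emax) (haO : 0 < aO) (haOP : aO < aP) :
    (∀ Z : EuclideanSpace ℝ (Fin 2),
      ((0 ≤ Z 0 ∧ 0 ≤ Z 1 ∧ Z 0 + Z 1 = (N * Emax / 2) * (1 + 1 / (I:ℝ))) ∧
        ∀ X : EuclideanSpace ℝ (Fin 2),
          (0 ≤ X 0 ∧ 0 ≤ X 1 ∧ X 0 + X 1 = (N * Emax / 2) * (1 + 1 / (I:ℝ))) →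
          0 ≤ aO / N * Z 0 * (X 0 - Z 0) + aP / N * Z 1 * (X 1 - Z 1))
      ↔ (Z 0 = (1 + 1 / (I:ℝ)) * (aP * (N * Emax / 2) / (aO + aP)) ∧
         Z 1 = (1 + 1 / (I:ℝ)) * (aO * (N * Emax / 2) / (aO + aP))))
    ∧ ∀ Z : EuclideanSpace ℝ (Fin 2),
        (Z 0 = (1 + 1 / (I:ℝ)) * (aP * (N * Emax / 2) / (aO + aP)) ∧
         Z 1 = (1 + 1 / (I:ℝ)) * (aO * (N * Emax / 2) / (aO + aP))) →
        Real.sqrt ((Z 0 - aP * (N * Emax / 2) / (aO + aP)) ^ 2 +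
            (Z 1 - aO * (N * Emax / 2) / (aO + aP)) ^ 2)
          = Real.sqrt ((aP * (N * Emax / 2) / (aO + aP)) ^ 2 +
              (aO * (N * Emax / 2) / (aO + aP)) ^ 2) / (I:ℝ)
        ∧ Real.sqrt ((aP * (N * Emax / 2) / (aO + aP)) ^ 2 +
              (aO * (N * Emax / 2) / (aO + aP)) ^ 2) / (I:ℝ)
          = Real.sqrt (aO ^ 2 + aP ^ 2) / (aO + aP) * (N * Emax / 2) / (I:ℝ) := by
  have haP : 0 < aP := haO.trans haOP
  have hsum : 0 < aO + aP := add_pos haO haP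
  refine ⟨fun Z => ?_, fun Z ⟨hZ0, hZ1⟩ => ⟨?_, ?_⟩⟩
  · rw [and_congr_right fun hZ =>
      vi_on_segment_iff_mul_eq_mul (div_nonneg haO.le hN.le) (div_nonneg haP.le hN.le) hZ,
      div_mul_eq_mul_div aO, div_mul_eq_mul_div aP, div_left_inj' hN.ne',
      segment_and_mul_eq_mul_iff haO.le haP.le hsum (by positivity)]
    have scaled_total : ∀ p : ℝ, p * (N * Emax / 2 * (1 + 1 / (I:ℝ))) / (aO + aP) =
        (1 + 1 / (I:ℝ)) * (p * (N * Emax / 2) / (aO + aP)) := fun p => by ring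
    rw [scaled_total, scaled_total]
  · have scaled_sub : ∀ p : ℝ, (1 + 1 / (I:ℝ)) * p - p = 1 / I * p := fun p => by ring
    rw [hZ0, hZ1, scaled_sub, scaled_sub, sqrt_mul_sq_add_mul_sq,
      abs_of_nonneg (by positivity), one_div_mul_eq_div]
  · have factor : ∀ p : ℝ, p * (N * Emax / 2) / (aO + aP) = N * Emax / 2 / (aO + aP) * p :=
      fun p => by ring
    rw [factor, factor, sqrt_mul_sq_add_mul_sq, abs_of_pos (by positivity), add_comm (aP ^ 2)]
    ring

/-- smart grid example, finite-type approximation: in the `I`-type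
approximating game, the aggregate set is
`S_I = {(X_O,X_P) ∈ ℝ²₊ : X_O + X_P = E_tot(1 + 1/I)}` and the symmetric equilibrium
aggregate (unique solution of the VI over `S_I`) is `X̂^I = (1 + 1/I)·X*`; hence
`‖X̂^I - X*‖ = ‖X*‖/I = (√(a_O² + a_P²)/(a_O + a_P))·E_tot/I`. -/
theorem smart_grid_finite_approximation {N Emax aO aP : ℝ} {I : ℕ}
    (hI : 0 < I) (hN : 0 < N) (hE : 0 < Emax) (haO : 0 < aO) (haOP : aO < aP) :
    (∀ Z : EuclideanSpace ℝ (Fin 2),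
      ((0 ≤ Z 0 ∧ 0 ≤ Z 1 ∧ Z 0 + Z 1 = (N * Emax / 2) * (1 + 1 / (I:ℝ))) ∧
        ∀ X : EuclideanSpace ℝ (Fin 2),
          (0 ≤ X 0 ∧ 0 ≤ X 1 ∧ X 0 + X 1 = (N * Emax / 2) * (1 + 1 / (I:ℝ))) →
          0 ≤ aO / N * Z 0 * (X 0 - Z 0) + aP / N * Z 1 * (X 1 - Z 1))
      ↔ (Z 0 = (1 + 1 / (I:ℝ)) * (aP * (N * Emax / 2) / (aO + aP)) ∧
         Z 1 = (1 + 1 / (I:ℝ)) * (aO * (N * Emax / 2) / (aO + aP))))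
    ∧ ∀ Z : EuclideanSpace ℝ (Fin 2),
        (Z 0 = (1 + 1 / (I:ℝ)) * (aP * (N * Emax / 2) / (aO + aP)) ∧
         Z 1 = (1 + 1 / (I:ℝ)) * (aO * (N * Emax / 2) / (aO + aP))) →
        Real.sqrt ((Z 0 - aP * (N * Emax / 2) / (aO + aP)) ^ 2 +
            (Z 1 - aO * (N * Emax / 2) / (aO + aP)) ^ 2)
          = Real.sqrt ((aP * (N * Emax / 2) / (aO + aP)) ^ 2 +
              (aO * (N * Emax / 2) / (aO + aP)) ^ 2) / (I:ℝ)
        ∧ Real.sqrt ((aP * (N * Emax / 2) / (aO + aP)) ^ 2 +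
              (aO * (N * Emax / 2) / (aO + aP)) ^ 2) / (I:ℝ)
          = Real.sqrt (aO ^ 2 + aP ^ 2) / (aO + aP) * (N * Emax / 2) / (I:ℝ) :=
  smart_grid_finite_approximation_general hN hE haO haOP
end
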